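/- arXiv:2209.01897 — 4 statements merged into one kernel-verified Lean document; each statement's English description precedes it below -/
import Mathlib

section
/- Let H be a Hopf algebra over a field k with antipode S. Let U be a k-vector space equipped with linear maps λ: U → H ⊗ U and ρ: U → U ⊗ H such that (U, λ) is a left H-comodule, (U, ρ) is a right H-comodule, and (1 ⊗ ρ) ∘ λ = (λ ⊗ 1) ∘ ρ (i.e. U is an H-bicomodule). Call u ∈ U stable if T(λ(u)) = ρ(u), where T: H ⊗ U → U ⊗ H is the twist x ⊗ y ↦ y ⊗ x. Define the adjoint coaction κ: U → U ⊗ H by κ(u) = Σ_i u_i ⊗ f_i'' S(f_i'), where (1 ⊗ ρ)λ(u) = Σ_i f_i' ⊗ u_i ⊗ f_i''. Then every stable element u satisfies κ(u) = u ⊗ 1; and if the antipode S is injective, then conversely every u with κ(u) = u ⊗ 1 is stable. -/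
/-!
Write `ρ u = u₍₀₎ ⊗ u₍₁₎` and `λ v = v₍₋₁₎ ⊗ v₍₀₎`. If `u` is stable, then `(1 ⊗ ρ) λ u` is the
twist of `(ρ ⊗ 1) ρ u = u₍₀₎ ⊗ u₍₁₎ ⊗ u₍₂₎`, so `κ u = u₍₀₎ ⊗ u₍₁₎ S(u₍₂₎) = u ⊗ 1`.

Conversely, the bicomodule compatibility gives `κ = β ∘ ρ` with `β (v ⊗ a) = v₍₀₎ ⊗ a S(v₍₋₁₎)`,
and by coassociativity of `λ` and `S(x₍₁₎) x₍₂₎ = ε(x)` the map `γ (v ⊗ a) = v₍₀₎ ⊗ a v₍₋₁₎` is a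
left inverse of `β`. So `κ u = u ⊗ 1` forces `ρ u = γ (u ⊗ 1) = T (λ u)`.
-/

open TensorProduct

namespace Paper

variable (k H U : Type) [Field k] [Ring H] [HopfAlgebra k H]
  [AddCommGroup U] [Module k U]

/-- The adjoint coaction `κ : U → U ⊗ H`, `κ(u) = Σ u_i ⊗ f_i'' S(f_i')` where
`(1 ⊗ ρ)(λ(u)) = Σ f_i' ⊗ u_i ⊗ f_i''`. -/
noncomputable def adjointCoaction (lam : U →ₗ[k] H ⊗[k] U) (rho : U →ₗ[k] U ⊗[k] H) :
    U →ₗ[k] U ⊗[k] H :=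
  (TensorProduct.map LinearMap.id
      ((LinearMap.mul' k H) ∘ₗ
        (TensorProduct.map LinearMap.id (HopfAlgebra.antipode (R := k))))) ∘ₗ
    (TensorProduct.assoc k U H H).toLinearMap ∘ₗ
    (TensorProduct.comm k H (U ⊗[k] H)).toLinearMap ∘ₗ
    (TensorProduct.map LinearMap.id rho) ∘ₗ lam

end Paper

namespace Paper

open Coalgebra HopfAlgebra

section RightComodule

variable {k H U : Type*} [CommSemiring k] [Semiring H] [HopfAlgebra k H]
  [AddCommMonoid U] [Module k U]

theorem map_mul_antipode_comul_coaction (rho : U →ₗ[k] U ⊗[k] H)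
    (hr2 : ∀ u, TensorProduct.rid k U (map LinearMap.id counit (rho u)) = u) (u : U) :
    map LinearMap.id (LinearMap.mul' k H ∘ₗ map LinearMap.id (antipode k))
      (map LinearMap.id comul (rho u)) = u ⊗ₜ 1 := by
  have hcounit : map LinearMap.id counit (rho u) = u ⊗ₜ 1 :=
    (TensorProduct.rid k U).injective (by rw [hr2]; simp)
  rw [map_map, LinearMap.comp_assoc, ← LinearMap.lTensor_def, mul_antipode_lTensor_comul,
    ← map_map, hcounit]
  simp

end RightComodule

section LeftComodule

variable {k H U : Type*} [CommSemiring k] [Semiring H] [HopfAlgebra k H]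
  [AddCommMonoid U] [Module k U] (lam : U →ₗ[k] H ⊗[k] U)

/-- In Sweedler notation `λ v = v₍₋₁₎ ⊗ v₍₀₎`, this is `v ⊗ a ↦ v₍₀₎ ⊗ φ (a ⊗ v₍₋₁₎)`. -/
noncomputable def twistedCoaction (φ : H ⊗[k] H →ₗ[k] H) : U ⊗[k] H →ₗ[k] U ⊗[k] H :=
  map LinearMap.id φ ∘ₗ (TensorProduct.assoc k U H H).toLinearMap ∘ₗ
    (TensorProduct.comm k H (U ⊗[k] H)).toLinearMap ∘ₗ
    (TensorProduct.assoc k H U H).toLinearMap ∘ₗ map lam LinearMap.id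

theorem twistedCoaction_tmul (φ : H ⊗[k] H →ₗ[k] H) (v : U) (a : H) :
    twistedCoaction lam φ (v ⊗ₜ a) =
      map LinearMap.id (φ ∘ₗ TensorProduct.mk k H H a) (TensorProduct.comm k H U (lam v)) := by
  simp only [twistedCoaction, LinearMap.comp_apply, map_tmul, LinearEquiv.coe_coe]
  induction lam v with
  | zero => simp
  | add w₁ w₂ h₁ h₂ => simp only [add_tmul, map_add, h₁, h₂]
  | tmul x v' => simp

theorem twistedCoaction_mul_tmul_one (v : U) :
    twistedCoaction lam (LinearMap.mul' k H) (v ⊗ₜ 1) = TensorProduct.comm k H U (lam v) := by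
  rw [twistedCoaction_tmul]
  induction TensorProduct.comm k H U (lam v) with
  | zero => simp
  | add w₁ w₂ h₁ h₂ => simp only [map_add, h₁, h₂]
  | tmul v' x => simp

/-- `x ⊗ (y ⊗ v) ↦ v ⊗ a S(x) y` -/
noncomputable def antipodeContraction (a : H) : H ⊗[k] (H ⊗[k] U) →ₗ[k] U ⊗[k] H :=
  map LinearMap.id (LinearMap.mulLeft k a ∘ₗ LinearMap.mul' k H ∘ₗ map (antipode k) LinearMap.id) ∘ₗ
    (TensorProduct.comm k (H ⊗[k] H) U).toLinearMap ∘ₗ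
    (TensorProduct.assoc k H H U).symm.toLinearMap

theorem twistedCoaction_mul_map_comm (a : H) (w : H ⊗[k] U) :
    twistedCoaction lam (LinearMap.mul' k H)
        (map LinearMap.id ((LinearMap.mul' k H ∘ₗ map LinearMap.id (antipode k)) ∘ₗ
          TensorProduct.mk k H H a) (TensorProduct.comm k H U w)) =
      antipodeContraction a (map LinearMap.id lam w) := by
  induction w with
  | zero => simp
  | add w₁ w₂ h₁ h₂ => simp only [map_add, h₁, h₂]
  | tmul x v =>
    simp only [TensorProduct.comm_tmul, map_tmul, twistedCoaction_tmul]
    induction lam v with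
    | zero => simp
    | add w₁ w₂ h₁ h₂ => simp only [tmul_add, map_add, h₁, h₂]
    | tmul y v' => simp [antipodeContraction, mul_assoc]

theorem antipodeContraction_map_coaction
    (hl1 : (TensorProduct.assoc k H H U).toLinearMap ∘ₗ (map comul LinearMap.id) ∘ₗ lam =
      (map LinearMap.id lam) ∘ₗ lam)
    (hl2 : ∀ v, TensorProduct.lid k U (map counit LinearMap.id (lam v)) = v) (a : H) (v : U) :
    antipodeContraction a (map LinearMap.id lam (lam v)) = v ⊗ₜ a := by
  have hcounit : map counit LinearMap.id (lam v) = 1 ⊗ₜ v :=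
    (TensorProduct.lid k U).injective (by rw [hl2]; simp)
  have hcoassoc := LinearMap.congr_fun hl1 v
  simp only [LinearMap.comp_apply, LinearEquiv.coe_coe] at hcoassoc
  simp only [antipodeContraction, ← hcoassoc, LinearMap.comp_apply, LinearEquiv.coe_coe,
    LinearEquiv.symm_apply_apply, map_comm, map_map]
  rw [LinearMap.comp_assoc, LinearMap.comp_assoc, ← LinearMap.rTensor_def,
    mul_antipode_rTensor_comul, ← LinearMap.comp_assoc, ← map_map, hcounit]
  simp

theorem twistedCoaction_mul_twistedCoaction_mulAntipode
    (hl1 : (TensorProduct.assoc k H H U).toLinearMap ∘ₗ (map comul LinearMap.id) ∘ₗ lam =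
      (map LinearMap.id lam) ∘ₗ lam)
    (hl2 : ∀ v, TensorProduct.lid k U (map counit LinearMap.id (lam v)) = v) (z : U ⊗[k] H) :
    twistedCoaction lam (LinearMap.mul' k H)
      (twistedCoaction lam (LinearMap.mul' k H ∘ₗ map LinearMap.id (antipode k)) z) = z := by
  induction z with
  | zero => simp
  | add z₁ z₂ h₁ h₂ => rw [map_add, map_add, h₁, h₂]
  | tmul v a => rw [twistedCoaction_tmul, twistedCoaction_mul_map_comm,
      antipodeContraction_map_coaction lam hl1 hl2]

end LeftComodule

section Bicomodule

variable {k H U : Type} [Field k] [Ring H] [HopfAlgebra k H] [AddCommGroup U] [Module k U]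
  (lam : U →ₗ[k] H ⊗[k] U) (rho : U →ₗ[k] U ⊗[k] H)

theorem adjointCoaction_apply_of_stable
    (hr1 : (TensorProduct.assoc k U H H).toLinearMap ∘ₗ
        (TensorProduct.map rho LinearMap.id) ∘ₗ rho =
        (TensorProduct.map LinearMap.id Coalgebra.comul) ∘ₗ rho)
    (hr2 : ∀ u : U,
      (TensorProduct.rid k U) ((TensorProduct.map LinearMap.id Coalgebra.counit) (rho u)) = u)
    {u : U} (hu : TensorProduct.comm k H U (lam u) = rho u) :
    adjointCoaction k H U lam rho u = u ⊗ₜ 1 := by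
  have hcoassoc := LinearMap.congr_fun hr1 u
  simp only [LinearMap.comp_apply, LinearEquiv.coe_coe] at hcoassoc
  simp only [adjointCoaction, LinearMap.comp_apply, LinearEquiv.coe_coe]
  rw [← map_comm, hu, hcoassoc, map_mul_antipode_comul_coaction rho hr2]

theorem adjointCoaction_eq_twistedCoaction_comp
    (hcompat : map LinearMap.id rho ∘ₗ lam =
      (TensorProduct.assoc k H U H).toLinearMap ∘ₗ map lam LinearMap.id ∘ₗ rho) :
    adjointCoaction k H U lam rho =
      twistedCoaction lam (LinearMap.mul' k H ∘ₗ map LinearMap.id (antipode k)) ∘ₗ rho := by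
  rw [adjointCoaction, hcompat]
  rfl

theorem stable_of_adjointCoaction_apply_eq
    (hl1 : (TensorProduct.assoc k H H U).toLinearMap ∘ₗ (map comul LinearMap.id) ∘ₗ lam =
      (map LinearMap.id lam) ∘ₗ lam)
    (hl2 : ∀ v, TensorProduct.lid k U (map counit LinearMap.id (lam v)) = v)
    (hcompat : map LinearMap.id rho ∘ₗ lam =
      (TensorProduct.assoc k H U H).toLinearMap ∘ₗ map lam LinearMap.id ∘ₗ rho)
    {u : U} (hu : adjointCoaction k H U lam rho u = u ⊗ₜ 1) :
    TensorProduct.comm k H U (lam u) = rho u := by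
  rw [← twistedCoaction_mul_tmul_one, ← hu, adjointCoaction_eq_twistedCoaction_comp lam rho hcompat,
    LinearMap.comp_apply, twistedCoaction_mul_twistedCoaction_mulAntipode lam hl1 hl2]

end Bicomodule

end Paper

open Paper in
/-- Lemma 6.1(i), in Hopf-algebraic form: let `U` be an `H`-bicomodule, with structure maps
`λ : U → H ⊗ U` and `ρ : U → U ⊗ H`.  Every stable element `u` (i.e. `T(λ(u)) = ρ(u)`)
satisfies `κ(u) = u ⊗ 1` for the adjoint coaction `κ`; and if the antipode is injective,
conversely every `u` with `κ(u) = u ⊗ 1` is stable. -/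
theorem statement13 (k H U : Type) [Field k] [Ring H] [HopfAlgebra k H]
    [AddCommGroup U] [Module k U]
    (lam : U →ₗ[k] H ⊗[k] U) (rho : U →ₗ[k] U ⊗[k] H)
    -- `(U, λ)` is a left `H`-comodule:
    (hl1 : (TensorProduct.assoc k H H U).toLinearMap ∘ₗ
        (TensorProduct.map Coalgebra.comul LinearMap.id) ∘ₗ lam =
        (TensorProduct.map LinearMap.id lam) ∘ₗ lam)
    (hl2 : ∀ u : U,
      (TensorProduct.lid k U) ((TensorProduct.map Coalgebra.counit LinearMap.id) (lam u)) = u)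
    -- `(U, ρ)` is a right `H`-comodule:
    (hr1 : (TensorProduct.assoc k U H H).toLinearMap ∘ₗ
        (TensorProduct.map rho LinearMap.id) ∘ₗ rho =
        (TensorProduct.map LinearMap.id Coalgebra.comul) ∘ₗ rho)
    (hr2 : ∀ u : U,
      (TensorProduct.rid k U) ((TensorProduct.map LinearMap.id Coalgebra.counit) (rho u)) = u)
    -- the bicomodule compatibility `(1 ⊗ ρ) ∘ λ = (λ ⊗ 1) ∘ ρ`:
    (hcompat : (TensorProduct.map LinearMap.id rho) ∘ₗ lam =
        (TensorProduct.assoc k H U H).toLinearMap ∘ₗ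
          (TensorProduct.map lam LinearMap.id) ∘ₗ rho) :
    (∀ u : U, (TensorProduct.comm k H U) (lam u) = rho u →
        adjointCoaction k H U lam rho u = u ⊗ₜ[k] 1) ∧
      (Function.Injective (HopfAlgebra.antipode (R := k) (A := H)) →
        ∀ u : U, adjointCoaction k H U lam rho u = u ⊗ₜ[k] 1 →
          (TensorProduct.comm k H U) (lam u) = rho u) := by
  exact ⟨fun _ hu => adjointCoaction_apply_of_stable lam rho hr1 hr2 hu,
    fun _ _ hu => stable_of_adjointCoaction_apply_eq lam rho hl1 hl2 hcompat hu⟩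
end

section
/- Let R be a discrete valuation ring with maximal ideal generated by π, and let A be an associative unital R-algebra which is torsion-free as an R-module and carries an algebra grading A = ⊕_{r≥0} A_r by R-submodules (A_u A_v ⊆ A_{u+v}) with each A_r a finitely generated R-module. Let φ_1, …, φ_n ∈ A be pairwise commuting homogeneous elements of positive degree, and denote by φ̄_1, …, φ̄_n their images in Ā = A/πA. Suppose φ̄_1, …, φ̄_n is a left regular sequence on Ā, i.e. φ̄_1 ā = 0 implies ā = 0, and for each 1 ≤ m < n, φ̄_{m+1} ā ∈ φ̄_1 Ā + ⋯ + φ̄_m Ā implies ā ∈ φ̄_1 Ā + ⋯ + φ̄_m Ā. Then φ_1, …, φ_n is a left regular sequence on A: φ_1 a = 0 implies a = 0, and for each 1 ≤ m < n, φ_{m+1} a ∈ φ_1 A + ⋯ + φ_m A implies a ∈ φ_1 A + ⋯ + φ_m A. -/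
open Finset in
theorem aux_mem_sum {R A ι : Type*} [Semiring R] [AddCommMonoid A] [Module R A]
    (s : Finset ι) (p : ι → Submodule R A) (a : A) (h : a ∈ ∑ i ∈ s, p i) :
    ∃ f : ι → A, (∀ i ∈ s, f i ∈ p i) ∧ a = ∑ i ∈ s, f i := by
  classical
  induction s using Finset.induction generalizing a with
  | empty => exact ⟨0, by simp, by simpa using h⟩
  | insert j s hns ih =>
    rw [Finset.sum_insert hns] at h
    obtain ⟨y, hy, z, hz, rfl⟩ := Submodule.mem_sup.mp h
    obtain ⟨f, hf, rfl⟩ := ih z hz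
    refine ⟨Function.update f j y, ?_, ?_⟩
    · intro i hi
      rcases Finset.mem_insert.mp hi with rfl | hi'
      · simpa using hy
      · rw [Function.update_of_ne (show i ≠ j from fun he => hns (he ▸ hi'))]; exact hf i hi'
    · rw [Finset.sum_insert hns, Function.update_self]
      congr 1
      exact (Finset.sum_congr rfl fun i hi =>
        (Function.update_of_ne (show i ≠ j from fun he => hns (he ▸ hi)) _ _).symm)

open Finset in
/-- Lemma 7.6: let `R` be a discrete valuation ring with maximal ideal generated by `π`, and
`A` a torsion-free graded `R`-algebra `A = ⊕_{r ≥ 0} A_r` with each `A_r` a finitely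
generated `R`-module.  Let `φ_1, …, φ_n ∈ A` be pairwise commuting homogeneous elements of
positive degree.  If the images `φ̄_1, …, φ̄_n` form a left regular sequence on `Ā = A/πA`
(expressed below via membership in `φ̄_1 Ā + ⋯ + φ̄_m Ā`, i.e. modulo `π`), then
`φ_1, …, φ_n` is a left regular sequence on `A`. -/
theorem statement17 (R A : Type) [CommRing R] [IsDomain R] [IsDiscreteValuationRing R]
    (π : R) (hπ : IsLocalRing.maximalIdeal R = Ideal.span {π})
    [Ring A] [Algebra R A] [NoZeroSMulDivisors R A]
    (𝒜 : ℕ → Submodule R A) [GradedRing 𝒜] (hFG : ∀ r, (𝒜 r).FG)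
    (n : ℕ) (φ : Fin n → A)
    (hcomm : ∀ i j, φ i * φ j = φ j * φ i)
    (d : Fin n → ℕ) (hd : ∀ i, 0 < d i) (hmem : ∀ i, φ i ∈ 𝒜 (d i))
    (hbar : ∀ (m : Fin n) (a : A),
      (∃ (x : Fin n → A) (b : A),
        φ m * a = (∑ i ∈ univ.filter (fun i => i < m), φ i * x i) + π • b) →
      ∃ (x : Fin n → A) (b : A),
        a = (∑ i ∈ univ.filter (fun i => i < m), φ i * x i) + π • b) :
    ∀ (m : Fin n) (a : A),
      (∃ x : Fin n → A, φ m * a = ∑ i ∈ univ.filter (fun i => i < m), φ i * x i) →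
      ∃ x : Fin n → A, a = ∑ i ∈ univ.filter (fun i => i < m), φ i * x i := by
  classical
  intro m a ha
  obtain ⟨x0, hx0⟩ := ha
  have hπ0 : π ≠ 0 := by
    intro h
    exact IsDiscreteValuationRing.not_a_field R
      (by rw [hπ, h, Ideal.span_singleton_eq_bot.mpr rfl])
  set S : Fin n → Submodule R A := fun j =>
    ∑ i ∈ univ.filter (fun i => i < j), LinearMap.range (LinearMap.mulLeft R (φ i)) with hSdef
  -- single term membership
  have hle : ∀ (j : Fin n) {i : Fin n}, i ∈ univ.filter (fun i' => i' < j) →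
      LinearMap.range (LinearMap.mulLeft R (φ i)) ≤ S j := by
    intro j i hi
    rw [hSdef]
    calc LinearMap.range (LinearMap.mulLeft R (φ i))
        ≤ (∑ i' ∈ (univ.filter (fun i' => i' < j)).erase i,
            LinearMap.range (LinearMap.mulLeft R (φ i'))) + LinearMap.range (LinearMap.mulLeft R (φ i)) := by
          rw [Submodule.add_eq_sup]; exact le_sup_right
      _ = _ := (Finset.sum_erase_add _ _ hi)
  have hφmem : ∀ (j i : Fin n), i < j → ∀ c : A, φ i * c ∈ S j := by
    intro j i hij c
    exact hle j (by simp [hij]) ⟨c, rfl⟩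
  have hS1 : ∀ (j : Fin n) (x : Fin n → A),
      (∑ i ∈ univ.filter (fun i' => i' < j), φ i * x i) ∈ S j := by
    intro j x
    exact Submodule.sum_mem _ fun i hi => hle j hi ⟨x i, rfl⟩
  have hS2 : ∀ (j : Fin n) (v : A), v ∈ S j →
      ∃ x : Fin n → A, v = ∑ i ∈ univ.filter (fun i' => i' < j), φ i * x i := by
    intro j v hv
    rw [hSdef] at hv
    obtain ⟨f, hf, rfl⟩ := aux_mem_sum _ _ _ hv
    choose! g hg using fun i hi => LinearMap.mem_range.mp (hf i hi)
    refine ⟨g, Finset.sum_congr rfl fun i hi => ?_⟩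
    rw [← hg i hi, LinearMap.mulLeft_apply]
  have hmono : ∀ {j j' : Fin n}, j ≤ j' → S j ≤ S j' := by
    intro j j' hjj
    rw [hSdef]
    refine Finset.sum_le_sum_of_subset ?_
    intro i hi
    simp only [Finset.mem_filter, Finset.mem_univ, true_and] at hi ⊢
    exact lt_of_lt_of_le hi hjj
  -- Lemma L : π-divisibility within S j
  have L : ∀ (k : ℕ) (j : Fin n), j.val ≤ k → ∀ t : A, π • t ∈ S j → t ∈ S j := by
    intro k
    induction k with
    | zero =>
      intro j hj t ht
      have hempty : univ.filter (fun i' => i' < j) = ∅ := by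
        apply Finset.filter_false_of_mem
        intro i _
        simp only [Fin.lt_def]
        omega
      obtain ⟨x, hx⟩ := hS2 j _ ht
      rw [hempty, Finset.sum_empty] at hx
      rcases smul_eq_zero.mp hx with h | h
      · exact absurd h hπ0
      · rw [h]; exact zero_mem _
    | succ k ih =>
      intro j hj t ht
      rcases Nat.eq_zero_or_eq_succ_pred j.val with hj0 | hjval
      · have hempty : univ.filter (fun i' => i' < j) = ∅ := by
          apply Finset.filter_false_of_mem
          intro i _
          simp only [Fin.lt_def]
          omega
        obtain ⟨x, hx⟩ := hS2 j _ ht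
        rw [hempty, Finset.sum_empty] at hx
        rcases smul_eq_zero.mp hx with h | h
        · exact absurd h hπ0
        · rw [h]; exact zero_mem _
      · set jj := j.val - 1 with hjj
        have hjval' : j.val = jj + 1 := by omega
        have hjjn : jj < n := by have := j.isLt; omega
        set j' : Fin n := ⟨jj, hjjn⟩ with hj'def
        have hj'lt : j' < j := by rw [Fin.lt_def]; show jj < j.val; omega
        have hj'notmem : j' ∉ univ.filter (fun i' => i' < j') := by simp
        have hfil : univ.filter (fun i' => i' < j) = insert j' (univ.filter (fun i' => i' < j')) := by
          ext i
          simp only [Finset.mem_insert, Finset.mem_filter, Finset.mem_univ, true_and,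
            Fin.lt_def, Fin.ext_iff]
          have h1 : (j' : ℕ) = jj := rfl
          omega
        obtain ⟨x, hx⟩ := hS2 j _ ht
        rw [hfil, Finset.sum_insert hj'notmem] at hx
        have h1 : φ j' * x j' =
            (∑ i ∈ univ.filter (fun i' => i' < j'), φ i * (-(x i))) + π • t := by
          have hneg : ∑ i ∈ univ.filter (fun i' => i' < j'), φ i * (-(x i)) =
              -∑ i ∈ univ.filter (fun i' => i' < j'), φ i * x i := by
            simp [mul_neg]
          rw [hneg, hx]; abel
        obtain ⟨w, c, hwc⟩ := hbar j' (x j') ⟨_, t, h1⟩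
        have key : π • (t - φ j' * c) =
            ∑ i ∈ univ.filter (fun i' => i' < j'), φ i * (x i + φ j' * w i) := by
          have e1 : ∀ i, φ i * (x i + φ j' * w i) = φ i * x i + φ j' * (φ i * w i) := by
            intro i; rw [mul_add, ← mul_assoc, hcomm i j', mul_assoc]
          rw [Finset.sum_congr rfl (fun i _ => e1 i), Finset.sum_add_distrib,
            ← Finset.mul_sum, smul_sub, hx, hwc, mul_add, mul_smul_comm]
          abel
        have htc : t - φ j' * c ∈ S j' := by
          refine ih j' (by omega) _ ?_
          rw [key]; exact hS1 j' _
        have : t = (t - φ j' * c) + φ j' * c := by abel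
        rw [this]
        exact Submodule.add_mem _ (hmono (le_of_lt hj'lt) htc) (hφmem j j' hj'lt c)
  set I : Ideal R := Ideal.span {π} with hIdef
  have hπI : π ∈ I := Ideal.subset_span rfl
  -- main approximation
  have hb0 : φ m * a ∈ S m := hx0 ▸ hS1 m x0
  have main : ∀ (k : ℕ) (b : A), φ m * b ∈ S m →
      b ∈ S m ⊔ I ^ k • (⊤ : Submodule R A) := by
    intro k
    induction k with
    | zero =>
      intro b _
      have : (I ^ 0 • ⊤ : Submodule R A) = ⊤ := by rw [pow_zero, one_smul]
      rw [this, sup_top_eq]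
      trivial
    | succ k ih =>
      intro b hb
      obtain ⟨x1, hx1⟩ := hS2 m _ hb
      obtain ⟨y, c, hyc⟩ := hbar m b ⟨x1, 0, by rw [hx1]; simp⟩
      have h2 : φ m * b = (∑ i ∈ univ.filter (fun i' => i' < m), φ i * (φ m * y i))
          + π • (φ m * c) := by
        rw [hyc, mul_add, mul_smul_comm, Finset.mul_sum]
        congr 1
        exact Finset.sum_congr rfl fun i _ => by rw [← mul_assoc, hcomm m i, mul_assoc]
      have h3 : π • (φ m * c) ∈ S m := by
        have he : π • (φ m * c) = φ m * b
            - ∑ i ∈ univ.filter (fun i' => i' < m), φ i * (φ m * y i) := by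
          rw [h2]; abel
        rw [he]
        exact Submodule.sub_mem _ hb (hS1 m _)
      have h4 : φ m * c ∈ S m := L m.val m le_rfl _ h3
      obtain ⟨sc, hsc, tc, htc, hstc⟩ := Submodule.mem_sup.mp (ih c h4)
      have hbe : b = ((∑ i ∈ univ.filter (fun i' => i' < m), φ i * y i) + π • sc) + π • tc := by
        rw [hyc, ← hstc, smul_add]; abel
      rw [hbe]
      refine Submodule.add_mem _
        (Submodule.mem_sup_left (Submodule.add_mem _ (hS1 m y) (Submodule.smul_mem _ π hsc)))
        (Submodule.mem_sup_right ?_)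
      have hsmul : π • tc ∈ I • (I ^ k • (⊤ : Submodule R A)) := Submodule.smul_mem_smul hπI htc
      rwa [pow_succ', ← smul_eq_mul, Submodule.smul_assoc]
  -- graded projections stay in S m
  have hproj : ∀ (r : ℕ) (v : A), v ∈ S m → (DirectSum.decompose 𝒜 v r : A) ∈ S m := by
    intro r v hv
    obtain ⟨x, rfl⟩ := hS2 m v hv
    have hcoe : ∀ u : A, (DirectSum.decompose 𝒜 u r : A) = GradedRing.proj 𝒜 r u :=
      fun u => rfl
    rw [hcoe, map_sum]
    refine Submodule.sum_mem _ fun i hi => ?_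
    rw [← hcoe]
    by_cases hdi : d i ≤ r
    · rw [DirectSum.coe_decompose_mul_of_left_mem_of_le 𝒜 (hmem i) hdi]
      exact hφmem m i (by simpa using (Finset.mem_filter.mp hi).2) _
    · rw [DirectSum.coe_decompose_mul_of_left_mem_of_not_le 𝒜 (hmem i) hdi]
      exact zero_mem _
  haveI : IsNoetherianRing R := inferInstance
  have hIne : I ≠ ⊤ := by rw [← hπ]; exact (IsLocalRing.maximalIdeal.isMaximal R).ne_top
  have hgr : ∀ r : ℕ, (DirectSum.decompose 𝒜 a r : A) ∈ S m := by
    intro r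
    set Sr : Submodule R (𝒜 r) := (S m).comap (𝒜 r).subtype with hSrdef
    haveI : Module.Finite R (𝒜 r) := Module.Finite.iff_fg.mpr (hFG r)
    set u : 𝒜 r := DirectSum.decompose 𝒜 a r with hu_def
    have hu : ∀ k : ℕ, u ∈ Sr ⊔ I ^ k • (⊤ : Submodule R (𝒜 r)) := by
      intro k
      obtain ⟨sa, hsa, ta, hta, hsta⟩ := Submodule.mem_sup.mp (main k a hb0)
      have hdec : u = DirectSum.decompose 𝒜 sa r + DirectSum.decompose 𝒜 ta r := by
        rw [hu_def, show a = sa + ta from hsta.symm, DirectSum.decompose_add,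
          DirectSum.add_apply]
      rw [hdec]
      refine Submodule.add_mem _ (Submodule.mem_sup_left ?_) (Submodule.mem_sup_right ?_)
      · exact Submodule.mem_comap.mpr (hproj r sa hsa)
      · refine Submodule.smul_induction_on hta ?_ ?_
        · intro rr hrr nn _
          rw [DirectSum.decompose_smul, DirectSum.smul_apply]
          exact Submodule.smul_mem_smul hrr Submodule.mem_top
        · intro v w hv hw
          rw [DirectSum.decompose_add, DirectSum.add_apply]
          exact Submodule.add_mem _ hv hw
    have hq : ∀ k : ℕ, Submodule.Quotient.mk (p := Sr) u
        ∈ (I ^ k • ⊤ : Submodule R ((𝒜 r) ⧸ Sr)) := by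
      intro k
      obtain ⟨sa, hsa, ta, hta, hsta⟩ := Submodule.mem_sup.mp (hu k)
      have hmk : Submodule.Quotient.mk (p := Sr) u = Submodule.Quotient.mk ta := by
        rw [show u = sa + ta from hsta.symm]
        rw [Submodule.Quotient.mk_add]
        rw [(Submodule.Quotient.mk_eq_zero _).mpr hsa, zero_add]
      rw [hmk]
      have hmap : Submodule.Quotient.mk (p := Sr) ta
          ∈ Submodule.map Sr.mkQ (I ^ k • ⊤) := Submodule.mem_map_of_mem hta
      rw [Submodule.map_smul''] at hmap
      exact (smul_mono_right (I ^ k) le_top :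
        (I ^ k • Submodule.map Sr.mkQ ⊤ : Submodule R ((𝒜 r) ⧸ Sr)) ≤ I ^ k • ⊤) hmap
    have hbot := Ideal.iInf_pow_smul_eq_bot_of_isLocalRing (I := I)
      (M := (𝒜 r) ⧸ Sr) hIne
    have hzero : Submodule.Quotient.mk (p := Sr) u = 0 := by
      have hm2 : Submodule.Quotient.mk (p := Sr) u
          ∈ (⨅ k : ℕ, I ^ k • ⊤ : Submodule R ((𝒜 r) ⧸ Sr)) :=
        Submodule.mem_iInf _ |>.mpr hq
      rw [hbot] at hm2
      simpa using hm2
    exact Submodule.mem_comap.mp ((Submodule.Quotient.mk_eq_zero _).mp hzero)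
  have haS : a ∈ S m := by
    rw [← DirectSum.sum_support_decompose 𝒜 a]
    exact Submodule.sum_mem _ fun r _ => hgr r
  exact hS2 m a haS
end

section
/- Let k be a field and A = ⊕_{r≥0} A_r a graded associative unital k-algebra with each A_r finite-dimensional and A_0 = k. Let φ_1, …, φ_n be central homogeneous elements of respective positive degrees d_1, …, d_n, forming an A-regular sequence (φ_1 a = 0 implies a = 0, and for 1 ≤ m < n, φ_{m+1} a ∈ φ_1 A + ⋯ + φ_m A implies a ∈ φ_1 A + ⋯ + φ_m A), and let J be the unital subalgebra of A generated by φ_1, …, φ_n; assume the φ_i are algebraically independent, so that J is a graded polynomial algebra k[φ_1, …, φ_n]. Write J⁺ for the ideal of J spanned by homogeneous elements of positive degree and Ā = A/AJ⁺, a graded vector space. Then for every r ≥ 0, dim_k A_r = Σ_{u+v=r} dim_k J_u · dim_k Ā_v. -/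
namespace S18

open Finset Module

variable {k A : Type} [Field k] [Ring A] [Algebra k A]

/-- The span of the products `φ i * c` for `↑i < m`. -/
def Imod (k : Type) [Field k] {A : Type} [Ring A] [Algebra k A] {n : ℕ}
    (φ : Fin n → A) (m : ℕ) : Submodule k A :=
  Submodule.span k {x | ∃ i : Fin n, (i : ℕ) < m ∧ ∃ c, x = φ i * c}

variable {n : ℕ} {φ : Fin n → A} {m : ℕ}

lemma mem_Imod_iff {x : A} :
    x ∈ Imod k φ m ↔
      ∃ y : Fin n → A, x = ∑ i ∈ univ.filter (fun i : Fin n => (i : ℕ) < m), φ i * y i := by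
  constructor
  · intro h
    induction h using Submodule.span_induction with
    | mem x hx =>
      obtain ⟨i, him, c, rfl⟩ := hx
      refine ⟨fun j => if j = i then c else 0, ?_⟩
      rw [Finset.sum_eq_single_of_mem i (by simp [him])]
      · simp
      · intro b _ hb; simp [hb]
    | zero => exact ⟨0, by simp⟩
    | add x y hx hy ihx ihy =>
      obtain ⟨y1, rfl⟩ := ihx; obtain ⟨y2, rfl⟩ := ihy
      exact ⟨y1 + y2, by simp [mul_add, Finset.sum_add_distrib]⟩
    | smul a x hx ihx =>
      obtain ⟨y1, rfl⟩ := ihx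
      exact ⟨a • y1, by simp [Finset.smul_sum, mul_smul_comm]⟩
  · rintro ⟨y, rfl⟩
    exact Submodule.sum_mem _ fun i hi =>
      Submodule.subset_span ⟨i, by simpa using hi, y i, rfl⟩

lemma Imod_mono {m m' : ℕ} (h : m ≤ m') : Imod k φ m ≤ Imod k φ m' :=
  Submodule.span_mono fun x => by rintro ⟨i, him, c, rfl⟩; exact ⟨i, him.trans_le h, c, rfl⟩

lemma mul_mem_Imod (hcen : ∀ (i : Fin n) (x : A), φ i * x = x * φ i)
    (j : Fin n) {x : A} (hx : x ∈ Imod k φ m) : φ j * x ∈ Imod k φ m := by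
  obtain ⟨y, rfl⟩ := mem_Imod_iff.1 hx
  rw [Finset.mul_sum]
  refine Submodule.sum_mem _ fun i hi => ?_
  have : φ j * (φ i * y i) = φ i * (φ j * y i) := by
    rw [← mul_assoc, hcen j (φ i), mul_assoc]
  rw [this]
  exact Submodule.subset_span ⟨i, by simpa using hi, _, rfl⟩

variable (𝒜 : ℕ → Submodule k A) [GradedRing 𝒜]

/-- Degree-`r` projection as a `k`-linear map. -/
def πL (r : ℕ) : A →ₗ[k] A where
  toFun x := (DirectSum.decompose 𝒜 x r : A)
  map_add' x y := by
    show ((DirectSum.decompose 𝒜 (x + y) r : A)) = _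
    rw [DirectSum.decompose_add, DirectSum.add_apply, Submodule.coe_add]
  map_smul' c x := by
    show ((DirectSum.decompose 𝒜 (c • x) r : A)) = _
    rw [DirectSum.decompose_smul, DirectSum.smul_apply, Submodule.coe_smul, RingHom.id_apply]

lemma πL_apply (r : ℕ) (x : A) : πL 𝒜 r x = (DirectSum.decompose 𝒜 x r : A) := rfl

lemma πL_mem (r : ℕ) (x : A) : πL 𝒜 r x ∈ 𝒜 r := SetLike.coe_mem _

lemma πL_of_mem_same {r : ℕ} {x : A} (hx : x ∈ 𝒜 r) : πL 𝒜 r x = x :=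
  DirectSum.decompose_of_mem_same 𝒜 hx

lemma πL_of_mem_ne {r s : ℕ} {x : A} (hx : x ∈ 𝒜 s) (h : s ≠ r) : πL 𝒜 r x = 0 := by
  simpa [πL_apply] using DirectSum.decompose_of_mem_ne 𝒜 hx h

lemma πL_mul_left {i r : ℕ} {a b : A} (ha : a ∈ 𝒜 i) :
    πL 𝒜 r (a * b) = if i ≤ r then a * πL 𝒜 (r - i) b else 0 := by
  rw [πL_apply, DirectSum.coe_decompose_mul_of_left_mem 𝒜 r ha]
  rfl

variable {d : Fin n → ℕ}

/-- A homogeneous element of `Imod k φ m` is a combination with homogeneous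
coefficients, the terms of too-high degree being dropped. -/
lemma Imod_homog (hmem : ∀ i, φ i ∈ 𝒜 (d i)) {r : ℕ} {x : A}
    (hx : x ∈ Imod k φ m) (hxr : x ∈ 𝒜 r) :
    ∃ y : Fin n → A, (∀ i, y i ∈ 𝒜 (r - d i)) ∧
      x = ∑ i ∈ univ.filter (fun i : Fin n => (i : ℕ) < m ∧ d i ≤ r), φ i * y i := by
  obtain ⟨y, rfl⟩ := mem_Imod_iff.1 hx
  refine ⟨fun i => πL 𝒜 (r - d i) (y i), fun i => πL_mem 𝒜 _ _, ?_⟩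
  conv_lhs => rw [← πL_of_mem_same 𝒜 hxr]
  rw [map_sum]
  rw [Finset.sum_filter, Finset.sum_filter]
  refine Finset.sum_congr rfl fun i _ => ?_
  rw [πL_mul_left 𝒜 (hmem i)]
  by_cases h1 : (i : ℕ) < m <;> by_cases h2 : d i ≤ r <;> simp [h1, h2]

lemma fd_of_le {P : Submodule k A} {r : ℕ} (hfd : FiniteDimensional k (𝒜 r))
    (h : P ≤ 𝒜 r) : FiniteDimensional k P :=
  Submodule.finiteDimensional_of_le (S₂ := 𝒜 r) h

/-- L1 : in degrees `r < d i`, nothing new appears. -/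
lemma Imod_succ_inf_of_lt (hmem : ∀ i, φ i ∈ 𝒜 (d i)) {i : Fin n} {r : ℕ}
    (hr : r < d i) :
    Imod k φ ((i : ℕ) + 1) ⊓ 𝒜 r = Imod k φ (i : ℕ) ⊓ 𝒜 r := by
  refine le_antisymm ?_ (inf_le_inf_right _ (Imod_mono (Nat.le_succ _)))
  rintro x ⟨hx, hxr⟩
  obtain ⟨y, -, rfl⟩ := Imod_homog 𝒜 hmem hx hxr
  refine ⟨Submodule.sum_mem _ fun j hj => ?_, hxr⟩
  simp only [Finset.mem_filter] at hj
  have hj' : (j : ℕ) < (i : ℕ) := by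
    rcases lt_or_eq_of_le (Nat.lt_succ_iff.1 hj.2.1) with h | h
    · exact h
    · exfalso; have : j = i := Fin.ext h
      subst this; exact absurd hj.2.2 (not_le.2 hr)
  exact Submodule.subset_span ⟨j, hj', y j, rfl⟩

/-- L2 : the dimension recursion in degrees `r ≥ d i`. -/
lemma dim_rec (hfd : ∀ r, FiniteDimensional k (𝒜 r))
    (hcen : ∀ (i : Fin n) (x : A), φ i * x = x * φ i)
    (hmem : ∀ i, φ i ∈ 𝒜 (d i))
    (hreg : ∀ (mm : Fin n) (a : A),
      (∃ x : Fin n → A, φ mm * a = ∑ i ∈ univ.filter (fun i => i < mm), φ i * x i) →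
      ∃ x : Fin n → A, a = ∑ i ∈ univ.filter (fun i => i < mm), φ i * x i)
    {i : Fin n} {r : ℕ} (hr : d i ≤ r) :
    finrank k (Imod k φ ((i : ℕ) + 1) ⊓ 𝒜 r : Submodule k A)
      + finrank k (Imod k φ (i : ℕ) ⊓ 𝒜 (r - d i) : Submodule k A)
    = finrank k (Imod k φ (i : ℕ) ⊓ 𝒜 r : Submodule k A)
      + finrank k (𝒜 (r - d i)) := by
  set m : ℕ := (i : ℕ) with hm
  set s : ℕ := r - d i with hs
  have hrs : d i + s = r := by omega
  have hfil : univ.filter (fun j : Fin n => j < i) =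
      univ.filter (fun j : Fin n => (j : ℕ) < m) := by
    apply Finset.filter_congr; intro j _; rw [hm]; exact Fin.lt_def
  haveI := hfd s
  haveI := hfd r
  -- the map c ↦ φ i * c  mod Imod m
  set g : (𝒜 s) →ₗ[k] (A ⧸ Imod k φ m) :=
    (Imod k φ m).mkQ ∘ₗ (LinearMap.mulLeft k (φ i)) ∘ₗ (𝒜 s).subtype with hg
  have hgapp : ∀ c : 𝒜 s, g c = Submodule.Quotient.mk (φ i * (c : A)) := fun c => rfl
  -- kernel of g
  have hker : LinearMap.ker g = Submodule.comap (𝒜 s).subtype (Imod k φ m ⊓ 𝒜 s) := by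
    ext c
    simp only [LinearMap.mem_ker, hgapp, Submodule.Quotient.mk_eq_zero, Submodule.mem_comap,
      Submodule.subtype_apply, Submodule.mem_inf]
    constructor
    · intro h
      obtain ⟨y, hy⟩ := mem_Imod_iff.1 h
      obtain ⟨x, hx⟩ := hreg i c ⟨y, by rwa [hfil]⟩
      rw [hfil] at hx
      exact ⟨mem_Imod_iff.2 ⟨x, hx⟩, c.2⟩
    · exact fun h => mul_mem_Imod hcen i h.1
  -- range of g
  have hrange : LinearMap.range g =
      Submodule.map (Imod k φ m).mkQ (Imod k φ (m + 1) ⊓ 𝒜 r) := by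
    apply le_antisymm
    · rintro q ⟨c, rfl⟩
      refine ⟨φ i * (c : A), ⟨Submodule.subset_span ⟨i, by omega, _, rfl⟩, ?_⟩, rfl⟩
      have := SetLike.mul_mem_graded (hmem i) c.2
      rwa [hrs] at this
    · rintro q ⟨x, ⟨hx, hxr⟩, rfl⟩
      obtain ⟨y, hymem, rfl⟩ := Imod_homog 𝒜 hmem hx hxr
      set F := univ.filter (fun j : Fin n => (j : ℕ) < m + 1 ∧ d j ≤ r) with hF
      by_cases hiF : i ∈ F
      · refine ⟨⟨y i, hymem i⟩, ?_⟩
        rw [hgapp]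
        rw [← Finset.sum_erase_add F _ hiF]
        rw [map_add]
        have : ((Imod k φ m).mkQ) (∑ j ∈ F.erase i, φ j * y j) = 0 := by
          rw [Submodule.mkQ_apply, Submodule.Quotient.mk_eq_zero]
          refine Submodule.sum_mem _ fun j hj => ?_
          have hj1 := (Finset.mem_erase.1 hj).1
          have hj2 := (Finset.mem_filter.1 (Finset.mem_erase.1 hj).2).2.1
          have : (j : ℕ) < m := by
            rcases lt_or_eq_of_le (Nat.lt_succ_iff.1 hj2) with h | h
            · exact h
            · exact absurd (Fin.ext h) hj1
          exact Submodule.subset_span ⟨j, this, y j, rfl⟩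
        rw [this, zero_add, Submodule.mkQ_apply]
      · refine ⟨0, ?_⟩
        rw [hgapp]
        have hall : ((Imod k φ m).mkQ) (∑ j ∈ F, φ j * y j) = 0 := by
          rw [Submodule.mkQ_apply, Submodule.Quotient.mk_eq_zero]
          refine Submodule.sum_mem _ fun j hj => ?_
          have hj2 := (Finset.mem_filter.1 hj).2.1
          have : (j : ℕ) < m := by
            rcases lt_or_eq_of_le (Nat.lt_succ_iff.1 hj2) with h | h
            · exact h
            · exact absurd hj (by rw [Fin.ext h]; exact hiF)
          exact Submodule.subset_span ⟨j, this, y j, rfl⟩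
        rw [hall]
        simp
  -- rank-nullity for g
  have rn1 : finrank k (LinearMap.range g) + finrank k (Imod k φ m ⊓ 𝒜 s : Submodule k A)
      = finrank k (𝒜 s) := by
    have := LinearMap.finrank_range_add_finrank_ker g
    rwa [hker, (Submodule.comapSubtypeEquivOfLe
        (inf_le_right : Imod k φ m ⊓ 𝒜 s ≤ 𝒜 s)).finrank_eq] at this
  -- the restriction of mkQ to N := Imod (m+1) ⊓ 𝒜 r
  set N : Submodule k A := Imod k φ (m + 1) ⊓ 𝒜 r with hN
  haveI : FiniteDimensional k N := fd_of_le 𝒜 (hfd r) inf_le_right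
  set h2 : N →ₗ[k] (A ⧸ Imod k φ m) := (Imod k φ m).mkQ ∘ₗ N.subtype with hh2
  have hrange2 : LinearMap.range h2 = Submodule.map (Imod k φ m).mkQ N := by
    rw [hh2, LinearMap.range_comp, Submodule.range_subtype]
  have hker2 : LinearMap.ker h2 = Submodule.comap N.subtype (Imod k φ m ⊓ N) := by
    rw [hh2, LinearMap.ker_comp, Submodule.ker_mkQ]
    ext c
    simp only [Submodule.mem_comap, Submodule.subtype_apply, Submodule.mem_inf]
    exact ⟨fun h => ⟨h, c.2⟩, fun h => h.1⟩
  have hIN : Imod k φ m ⊓ N = Imod k φ m ⊓ 𝒜 r := by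
    rw [hN, ← inf_assoc, inf_eq_left.2 (Imod_mono (Nat.le_succ m))]
  have rn2 : finrank k (LinearMap.range h2) + finrank k (Imod k φ m ⊓ 𝒜 r : Submodule k A)
      = finrank k N := by
    have := LinearMap.finrank_range_add_finrank_ker h2
    rwa [hker2, hIN, (Submodule.comapSubtypeEquivOfLe
        (le_trans (by rw [← hIN]) (inf_le_right : Imod k φ m ⊓ N ≤ N))).finrank_eq] at this
  have hrr : LinearMap.range h2 = LinearMap.range g := by rw [hrange2, hrange]
  rw [hrr] at rn2
  omega

/-! ### Counting monomial exponents -/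

/-- weighted degree of an exponent vector -/
def w {n : ℕ} (d : Fin n → ℕ) (α : Fin n →₀ ℕ) : ℕ := ∑ i, α i * d i

/-- number of exponent vectors supported on indices `< m` of weighted degree `u` -/
noncomputable def pcount {n : ℕ} (d : Fin n → ℕ) (m u : ℕ) : ℕ :=
  Set.ncard {α : Fin n →₀ ℕ | (∀ i : Fin n, m ≤ (i : ℕ) → α i = 0) ∧ w d α = u}

section Counting

variable {n : ℕ} {d : Fin n → ℕ}

lemma w_add (α β : Fin n →₀ ℕ) : w d (α + β) = w d α + w d β := by
  simp [w, add_mul, Finset.sum_add_distrib]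

lemma w_single (i : Fin n) : w d (Finsupp.single i 1) = d i := by
  simp [w, Finsupp.single_apply]

lemma apply_le_of_w_eq (hd : ∀ i, 0 < d i) {α : Fin n →₀ ℕ} {u : ℕ} (h : w d α = u)
    (i : Fin n) : α i ≤ u := by
  calc α i ≤ α i * d i := Nat.le_mul_of_pos_right _ (hd i)
  _ ≤ ∑ j, α j * d j :=
    Finset.single_le_sum (f := fun j => α j * d j) (fun j _ => Nat.zero_le _) (Finset.mem_univ i)
  _ = u := h

lemma finite_w_eq (hd : ∀ i, 0 < d i) (u : ℕ) (P : (Fin n →₀ ℕ) → Prop) :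
    {α : Fin n →₀ ℕ | P α ∧ w d α = u}.Finite := by
  have h1 : {f : Fin n → ℕ | ∀ i, f i ≤ u}.Finite := by
    have : {f : Fin n → ℕ | ∀ i, f i ≤ u} = Set.pi Set.univ (fun _ => Set.Iic u) := by
      ext f; simp [Set.mem_pi, Pi.le_def]
    rw [this]
    exact Set.Finite.pi (fun _ => Set.finite_Iic u)
  have h2 : {α : Fin n →₀ ℕ | ∀ i, α i ≤ u}.Finite := by
    have : {α : Fin n →₀ ℕ | ∀ i, α i ≤ u} =
        (Finsupp.equivFunOnFinite) ⁻¹' {f : Fin n → ℕ | ∀ i, f i ≤ u} := rfl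
    rw [this]
    exact Set.Finite.preimage (Equiv.injective _).injOn h1
  exact h2.subset fun α hα => fun i => apply_le_of_w_eq hd hα.2 i

lemma pcount_zero (u : ℕ) : pcount d 0 u = if u = 0 then 1 else 0 := by
  have hset : {α : Fin n →₀ ℕ | (∀ i : Fin n, 0 ≤ (i : ℕ) → α i = 0) ∧ w d α = u} =
      if u = 0 then {0} else ∅ := by
    split_ifs with h
    · subst h
      ext α
      simp only [Set.mem_setOf_eq, Set.mem_singleton_iff]
      constructor
      · rintro ⟨h1, -⟩; ext i; exact h1 i (Nat.zero_le _)
      · rintro rfl; exact ⟨fun i _ => rfl, by simp [w]⟩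
    · ext α
      simp only [Set.mem_setOf_eq, Set.mem_empty_iff_false, iff_false]
      rintro ⟨h1, h2⟩
      apply h
      rw [← h2, w]
      apply Finset.sum_eq_zero
      intro i _
      rw [h1 i (Nat.zero_le _), zero_mul]
  rw [pcount, hset]
  split_ifs <;> simp

lemma pcount_succ (hd : ∀ i, 0 < d i) {m : ℕ} (hmn : m < n) (u : ℕ) :
    pcount d (m + 1) u = pcount d m u +
      (if d ⟨m, hmn⟩ ≤ u then pcount d (m + 1) (u - d ⟨m, hmn⟩) else 0) := by
  set im : Fin n := ⟨m, hmn⟩ with him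
  have him' : (im : ℕ) = m := rfl
  set X : Set (Fin n →₀ ℕ) :=
    {α | (∀ i : Fin n, m + 1 ≤ (i : ℕ) → α i = 0) ∧ w d α = u} with hX
  set X0 : Set (Fin n →₀ ℕ) := {α ∈ X | α im = 0} with hX0
  set X1 : Set (Fin n →₀ ℕ) := {α ∈ X | α im ≠ 0} with hX1
  have hunion : X = X0 ∪ X1 := by
    ext α
    simp only [hX0, hX1, Set.mem_union, Set.mem_setOf_eq]
    tauto
  have hdisj : Disjoint X0 X1 := by
    rw [Set.disjoint_iff]
    rintro α ⟨h0, h1⟩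
    exact absurd h0.2 h1.2
  have hXfin : X.Finite := finite_w_eq hd u _
  have hcard : X.ncard = X0.ncard + X1.ncard := by
    rw [hunion]
    exact Set.ncard_union_eq hdisj (hXfin.subset (by rw [hunion]; exact Set.subset_union_left))
      (hXfin.subset (by rw [hunion]; exact Set.subset_union_right))
  have hX0eq : X0 = {α : Fin n →₀ ℕ | (∀ i : Fin n, m ≤ (i : ℕ) → α i = 0) ∧ w d α = u} := by
    ext α
    simp only [hX0, hX, Set.mem_setOf_eq]
    constructor
    · rintro ⟨⟨h1, h2⟩, h3⟩
      refine ⟨fun i hi => ?_, h2⟩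
      rcases Nat.lt_or_ge (i : ℕ) (m + 1) with h | h
      · have : i = im := Fin.ext (by omega)
        rw [this]; exact h3
      · exact h1 i h
    · rintro ⟨h1, h2⟩
      exact ⟨⟨fun i hi => h1 i (by omega), h2⟩, h1 im (by simp [him])⟩
  by_cases hdu : d im ≤ u
  · have hX1eq : X1 = (fun β => β + Finsupp.single im 1) ''
        {α : Fin n →₀ ℕ | (∀ i : Fin n, m + 1 ≤ (i : ℕ) → α i = 0) ∧ w d α = u - d im} := by
      ext α
      simp only [hX1, hX, Set.mem_setOf_eq, Set.mem_image]
      constructor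
      · rintro ⟨⟨h1, h2⟩, h3⟩
        have hle : Finsupp.single im 1 ≤ α := by
          rw [Finsupp.single_le_iff]
          omega
        refine ⟨α - Finsupp.single im 1, ⟨?_, ?_⟩, tsub_add_cancel_of_le hle⟩
        · intro i hi
          have := h1 i hi
          have h4 : ((α - Finsupp.single im 1 : Fin n →₀ ℕ)) i ≤ α i := by
            rw [Finsupp.tsub_apply]; omega
          omega
        · have := w_add (d := d) (α - Finsupp.single im 1) (Finsupp.single im 1)
          rw [tsub_add_cancel_of_le hle, h2, w_single] at this
          omega
      · rintro ⟨β, ⟨h1, h2⟩, rfl⟩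
        refine ⟨⟨fun i hi => ?_, ?_⟩, ?_⟩
        · have hne : im ≠ i := by intro hh; rw [← hh] at hi; omega
          rw [Finsupp.add_apply, h1 i hi, Finsupp.single_apply, if_neg hne, add_zero]
        · rw [w_add, h2, w_single]; omega
        · simp [Finsupp.add_apply, Finsupp.single_apply]
    have hX1card : X1.ncard =
        Set.ncard {α : Fin n →₀ ℕ | (∀ i : Fin n, m + 1 ≤ (i : ℕ) → α i = 0) ∧
          w d α = u - d im} := by
      rw [hX1eq]
      exact Set.ncard_image_of_injective _ (add_left_injective _)
    rw [if_pos hdu]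
    show X.ncard = pcount d m u + pcount d (m + 1) (u - d im)
    rw [hcard, hX0eq, hX1card]
    rfl
  · have hX1empty : X1 = ∅ := by
      ext α
      simp only [hX1, hX, Set.mem_setOf_eq, Set.mem_empty_iff_false, iff_false, not_and]
      rintro ⟨h1, h2⟩ h3
      apply hdu
      calc d im ≤ α im * d im := Nat.le_mul_of_pos_left _ (Nat.pos_of_ne_zero h3)
      _ ≤ ∑ j, α j * d j := Finset.single_le_sum (f := fun j => α j * d j)
            (fun j _ => Nat.zero_le _) (Finset.mem_univ im)
      _ = u := h2
    rw [if_neg hdu, add_zero]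
    show X.ncard = pcount d m u
    rw [hcard, hX0eq, hX1empty, Set.ncard_empty, add_zero]
    rfl

end Counting

/-! ### Monomials -/

section Mono

variable {R : Type} [Ring R]

/-- the monomial with exponent vector `a` -/
def Mfun {q : ℕ} (ψ : Fin q → R) (a : Fin q → ℕ) : R :=
  (List.ofFn fun i => ψ i ^ a i).prod

lemma Mfun_succ {q : ℕ} (ψ : Fin (q + 1) → R) (a : Fin (q + 1) → ℕ) :
    Mfun ψ a = ψ 0 ^ a 0 * Mfun (ψ ∘ Fin.succ) (a ∘ Fin.succ) := by
  rw [Mfun, List.ofFn_succ, List.prod_cons]; rfl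

lemma Mfun_zero {q : ℕ} (ψ : Fin q → R) {a : Fin q → ℕ} (ha : ∀ i, a i = 0) :
    Mfun ψ a = 1 := by
  apply List.prod_eq_one
  intro x hx
  rw [List.mem_ofFn] at hx
  obtain ⟨i, rfl⟩ := hx
  simp [ha]

lemma Mfun_mul {q : ℕ} {ψ : Fin q → R} (hc : ∀ (i : Fin q) (x : R), ψ i * x = x * ψ i)
    (a b : Fin q → ℕ) : Mfun ψ a * Mfun ψ b = Mfun ψ (a + b) := by
  induction q with
  | zero => simp [Mfun]
  | succ q ih =>
    rw [Mfun_succ, Mfun_succ, Mfun_succ]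
    have hc' : ∀ (i : Fin q) (x : R), (ψ ∘ Fin.succ) i * x = x * (ψ ∘ Fin.succ) i :=
      fun i x => hc i.succ x
    have h2 : (a + b) ∘ Fin.succ = a ∘ Fin.succ + b ∘ Fin.succ := rfl
    have h3 : (a + b) 0 = a 0 + b 0 := rfl
    set Ta := Mfun (ψ ∘ Fin.succ) (a ∘ Fin.succ) with hTa
    set Tb := Mfun (ψ ∘ Fin.succ) (b ∘ Fin.succ) with hTb
    have hcomm : Commute (ψ 0) Ta := hc 0 Ta
    have hco := (hcomm.pow_left (b 0)).eq
    rw [h2, h3, ← ih hc', ← hTa, ← hTb, pow_add]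
    calc ψ 0 ^ a 0 * Ta * (ψ 0 ^ b 0 * Tb)
        = ψ 0 ^ a 0 * (Ta * ψ 0 ^ b 0 * Tb) := by rw [mul_assoc, mul_assoc]
      _ = ψ 0 ^ a 0 * (ψ 0 ^ b 0 * Ta * Tb) := by rw [← hco]
      _ = ψ 0 ^ a 0 * ψ 0 ^ b 0 * (Ta * Tb) := by
          rw [← mul_assoc, ← mul_assoc, mul_assoc (ψ 0 ^ a 0 * ψ 0 ^ b 0)]

lemma Mfun_single {q : ℕ} (ψ : Fin q → R) {a : Fin q → ℕ} {i : Fin q}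
    (h1 : a i = 1) (h0 : ∀ j, j ≠ i → a j = 0) : Mfun ψ a = ψ i := by
  induction q with
  | zero => exact i.elim0
  | succ q ih =>
    rw [Mfun_succ]
    rcases Fin.eq_zero_or_eq_succ i with hi | ⟨j, rfl⟩
    · subst hi
      rw [h1, pow_one, Mfun_zero (ψ ∘ Fin.succ) (a := a ∘ Fin.succ)
        (fun j => h0 j.succ (Fin.succ_ne_zero j)), mul_one]
    · rw [h0 0 (Fin.succ_ne_zero j).symm, pow_zero, one_mul]
      exact ih (ψ ∘ Fin.succ) (a := a ∘ Fin.succ) (i := j) h1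
        (fun l hl => h0 l.succ (fun hh => hl (Fin.succ_injective _ hh)))

end Mono

section MonoGraded

variable {n : ℕ} {φ : Fin n → A} {d : Fin n → ℕ} (𝒜 : ℕ → Submodule k A) [GradedRing 𝒜]

lemma Mfun_mem_graded (hmem : ∀ i, φ i ∈ 𝒜 (d i)) (α : Fin n →₀ ℕ) :
    Mfun φ (α : Fin n → ℕ) ∈ 𝒜 (w d α) := by
  have h := SetLike.list_prod_map_mem_graded (A := 𝒜) (List.finRange n)
    (fun i => α i * d i) (fun i => φ i ^ α i)
    (fun j _ => by simpa [smul_eq_mul] using SetLike.pow_mem_graded (α j) (hmem j))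
  rw [← List.ofFn_eq_map, ← List.ofFn_eq_map] at h
  have hsum : (List.ofFn fun i => α i * d i).sum = w d α := by
    rw [List.sum_ofFn]; rfl
  rwa [hsum] at h

/-- the subalgebra generated by the `φ i` is spanned by the monomials -/
lemma adjoin_eq_span_Mfun (hcen : ∀ (i : Fin n) (x : A), φ i * x = x * φ i) :
    Subalgebra.toSubmodule (Algebra.adjoin k (Set.range φ)) =
      Submodule.span k (Set.range fun α : Fin n →₀ ℕ => Mfun φ (α : Fin n → ℕ)) := by
  rw [Algebra.adjoin_eq_span]
  congr 1
  apply le_antisymm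
  · intro x hx
    induction hx using Submonoid.closure_induction with
    | mem x hx =>
      obtain ⟨i, rfl⟩ := hx
      refine ⟨Finsupp.single i 1, ?_⟩
      exact Mfun_single φ (by simp) (fun j hj => by
        rw [Finsupp.single_apply, if_neg (fun hh => hj hh.symm)])
    | one => exact ⟨0, (Mfun_zero φ (fun i => rfl)).symm ▸ rfl⟩
    | mul x y hx hy ihx ihy =>
      obtain ⟨α, rfl⟩ := ihx
      obtain ⟨β, rfl⟩ := ihy
      refine ⟨α + β, ?_⟩
      show Mfun φ ⇑(α + β) = Mfun φ ⇑α * Mfun φ ⇑β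
      rw [Finsupp.coe_add, ← Mfun_mul hcen]
  · intro x hx
    obtain ⟨α, rfl⟩ := hx
    refine Submonoid.list_prod_mem _ fun y hy => ?_
    rw [List.mem_ofFn] at hy
    obtain ⟨i, rfl⟩ := hy
    show φ i ^ α i ∈ (Submonoid.closure (Set.range φ) : Set A)
    rw [SetLike.mem_coe]
    exact pow_mem (Submonoid.subset_closure (Set.mem_range_self i)) _

/-- graded piece of the span of a family of homogeneous elements -/
lemma span_inf_graded {ι : Type} (v : ι → A) (wt : ι → ℕ) (hv : ∀ j, v j ∈ 𝒜 (wt j))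
    (u : ℕ) :
    Submodule.span k (Set.range v) ⊓ 𝒜 u = Submodule.span k (v '' {j | wt j = u}) := by
  apply le_antisymm
  · rintro x ⟨hx, hxu⟩
    rw [SetLike.mem_coe, Finsupp.mem_span_range_iff_exists_finsupp] at hx
    obtain ⟨c, rfl⟩ := hx
    have : πL 𝒜 u (c.sum fun i a => a • v i) = c.sum fun i a => a • πL 𝒜 u (v i) := by
      rw [map_finsuppSum]
      exact Finsupp.sum_congr fun j _ => map_smul _ _ _
    rw [← πL_of_mem_same 𝒜 hxu, this, Finsupp.sum]
    refine Submodule.sum_mem _ fun j _ => ?_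
    by_cases hj : wt j = u
    · rw [πL_of_mem_same 𝒜 (hj ▸ hv j)]
      exact Submodule.smul_mem _ _ (Submodule.subset_span ⟨j, hj, rfl⟩)
    · rw [πL_of_mem_ne 𝒜 (hv j) hj, smul_zero]
      exact Submodule.zero_mem _
  · rw [Submodule.span_le]
    rintro x ⟨j, hj, rfl⟩
    exact ⟨Submodule.subset_span ⟨j, rfl⟩, hj ▸ hv j⟩

lemma finrank_span_image {ι : Type} {v : ι → A} (hli : LinearIndependent k v)
    (S : Set ι) (hfin : S.Finite) :
    finrank k (Submodule.span k (v '' S)) = S.ncard := by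
  haveI := hfin.fintype
  have h1 : LinearIndependent k (fun j : S => v j) := hli.comp _ Subtype.val_injective
  have h2 : Set.range (fun j : S => v j) = v '' S := by
    rw [← Set.image_eq_range]
  rw [← h2, finrank_span_eq_card h1, ← Nat.card_coe_set_eq, Nat.card_eq_fintype_card]

end MonoGraded

/-! ### Sum manipulation helpers -/

lemma sum_shift (f : ℕ → ℤ) (dd r : ℕ) :
    ∑ u ∈ Finset.range (r + 1), (if dd ≤ u then f (u - dd) else 0) =
      if dd ≤ r then ∑ t ∈ Finset.range (r - dd + 1), f t else 0 := by
  by_cases h : dd ≤ r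
  · rw [if_pos h, ← Finset.sum_filter]
    have hfil : (Finset.range (r + 1)).filter (fun u => dd ≤ u) = Finset.Ico dd (r + 1) := by
      ext u; simp only [Finset.mem_filter, Finset.mem_range, Finset.mem_Ico]; omega
    rw [hfil, Finset.sum_Ico_eq_sum_range]
    have : r + 1 - dd = r - dd + 1 := by omega
    rw [this]
    exact Finset.sum_congr rfl fun t _ => by rw [Nat.add_sub_cancel_left]
  · rw [if_neg h]
    exact Finset.sum_eq_zero fun u hu => by
      rw [if_neg]; rw [Finset.mem_range] at hu; omega

lemma sum_shift' (f : ℕ → ℤ) (dd r : ℕ) :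
    ∑ u ∈ Finset.range (r + 1), (if dd ≤ r - u then f u else 0) =
      if dd ≤ r then ∑ u ∈ Finset.range (r - dd + 1), f u else 0 := by
  by_cases h : dd ≤ r
  · rw [if_pos h, ← Finset.sum_filter]
    have hfil : (Finset.range (r + 1)).filter (fun u => dd ≤ r - u) =
        Finset.range (r - dd + 1) := by
      ext u; simp only [Finset.mem_filter, Finset.mem_range]; omega
    rw [hfil]
  · rw [if_neg h]
    exact Finset.sum_eq_zero fun u hu => by
      rw [if_neg]; rw [Finset.mem_range] at hu; omega

/-! ### The main induction -/

section Main

variable {n : ℕ} {φ : Fin n → A} {d : Fin n → ℕ} (𝒜 : ℕ → Submodule k A) [GradedRing 𝒜]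

lemma Imod_zero : Imod k φ 0 = ⊥ := by
  rw [Imod]
  convert Submodule.span_empty
  ext x
  simp

lemma main_ind (hfd : ∀ r, FiniteDimensional k (𝒜 r))
    (hcen : ∀ (i : Fin n) (x : A), φ i * x = x * φ i)
    (hd : ∀ i, 0 < d i) (hmem : ∀ i, φ i ∈ 𝒜 (d i))
    (hreg : ∀ (mm : Fin n) (a : A),
      (∃ x : Fin n → A, φ mm * a = ∑ i ∈ univ.filter (fun i => i < mm), φ i * x i) →
      ∃ x : Fin n → A, a = ∑ i ∈ univ.filter (fun i => i < mm), φ i * x i) :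
    ∀ m : ℕ, m ≤ n → ∀ r : ℕ,
      (finrank k (𝒜 r) : ℤ) =
        ∑ u ∈ Finset.range (r + 1), (pcount d m u : ℤ) *
          ((finrank k (𝒜 (r - u)) : ℤ) -
            (finrank k (Imod k φ m ⊓ 𝒜 (r - u) : Submodule k A) : ℤ)) := by
  intro m
  induction m with
  | zero =>
    intro _ r
    rw [Finset.sum_eq_single 0]
    · rw [pcount_zero, if_pos rfl, Imod_zero, bot_inf_eq]
      simp
    · intro u hu hu0
      rw [pcount_zero, if_neg hu0]
      simp
    · intro h
      exact absurd (Finset.mem_range.2 (by omega)) h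
  | succ m ih =>
    intro hsucc r
    have hmn : m < n := hsucc
    have ihm := ih (le_of_lt hmn)
    set im : Fin n := ⟨m, hmn⟩ with him
    have him' : (im : ℕ) = m := rfl
    set D : ℕ := d im with hD
    have hD1 : 0 < D := hd im
    -- abbreviations
    set G : ℕ → ℤ := fun v => (finrank k (𝒜 v) : ℤ) with hG
    set FF : ℕ → ℕ → ℤ :=
      fun m' v => (finrank k (Imod k φ m' ⊓ 𝒜 v : Submodule k A) : ℤ) with hFF
    set P : ℕ → ℕ → ℤ := fun m' u => (pcount d m' u : ℤ) with hP
    -- the two recursions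
    have R2 : ∀ v, FF (m + 1) v =
        FF m v + (if D ≤ v then G (v - D) - FF m (v - D) else 0) := by
      intro v
      by_cases hv : D ≤ v
      · have hrec : finrank k (Imod k φ (m + 1) ⊓ 𝒜 v : Submodule k A)
            + finrank k (Imod k φ m ⊓ 𝒜 (v - d im) : Submodule k A)
            = finrank k (Imod k φ m ⊓ 𝒜 v : Submodule k A) + finrank k (𝒜 (v - d im)) :=
          dim_rec 𝒜 hfd hcen hmem hreg (i := im) hv
        rw [if_pos hv]
        simp only [hFF, hG, hD]
        omega
      · rw [if_neg hv, add_zero]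
        have := Imod_succ_inf_of_lt 𝒜 hmem (i := im) (not_le.1 hv)
        simp only [him'] at this
        simp only [hFF]
        rw [this]
    have R1 : ∀ u, P (m + 1) u =
        P m u + (if D ≤ u then P (m + 1) (u - D) else 0) := by
      intro u
      have := pcount_succ hd hmn u
      rw [hP]
      simp only []
      rw [this, Nat.cast_add]
      congr 1
      split_ifs <;> simp [hD, him]
    -- strong induction on r
    clear ih
    induction r using Nat.strong_induction_on with
    | _ r ihr =>
    have step1 : ∀ u ∈ Finset.range (r + 1),
        P (m + 1) u * (G (r - u) - FF (m + 1) (r - u)) =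
          P m u * (G (r - u) - FF (m + 1) (r - u)) +
            (if D ≤ u then
              P (m + 1) (u - D) * (G ((r - D) - (u - D)) - FF (m + 1) ((r - D) - (u - D)))
            else 0) := by
      intro u hu
      rw [Finset.mem_range] at hu
      rw [R1 u, add_mul]
      congr 1
      split_ifs with h
      · have e : (r - D) - (u - D) = r - u := by omega
        rw [e]
      · rw [zero_mul]
    rw [Finset.sum_congr rfl step1, Finset.sum_add_distrib]
    -- second summand : sum_shift then strong induction hypothesis
    have hT2 : ∑ u ∈ Finset.range (r + 1),
        (if D ≤ u then
          P (m + 1) (u - D) * (G ((r - D) - (u - D)) - FF (m + 1) ((r - D) - (u - D)))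
        else 0) = if D ≤ r then G (r - D) else 0 := by
      rw [sum_shift (fun t => P (m + 1) t * (G ((r - D) - t) - FF (m + 1) ((r - D) - t))) D r]
      split_ifs with h
      · exact (ihr (r - D) (by omega)).symm
      · rfl
    rw [hT2]
    -- first summand : expand FF (m+1) via R2
    have step2 : ∀ u ∈ Finset.range (r + 1),
        P m u * (G (r - u) - FF (m + 1) (r - u)) =
          P m u * (G (r - u) - FF m (r - u)) -
            (if D ≤ r - u then
              P m u * (G ((r - D) - u) - FF m ((r - D) - u)) else 0) := by
      intro u hu
      rw [Finset.mem_range] at hu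
      rw [R2 (r - u)]
      split_ifs with h
      · have e : (r - u) - D = (r - D) - u := by omega
        rw [e]; ring
      · ring
    rw [Finset.sum_congr rfl step2, Finset.sum_sub_distrib]
    have hT3 : ∑ u ∈ Finset.range (r + 1),
        (if D ≤ r - u then P m u * (G ((r - D) - u) - FF m ((r - D) - u)) else 0) =
          if D ≤ r then G (r - D) else 0 := by
      rw [sum_shift' (fun u => P m u * (G ((r - D) - u) - FF m ((r - D) - u))) D r]
      split_ifs with h
      · exact (ihm (r - D)).symm
      · rfl
    rw [hT3, ← ihm r]
    ring

lemma Jdim (hcen : ∀ (i : Fin n) (x : A), φ i * x = x * φ i) (hd : ∀ i, 0 < d i)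
    (hmem : ∀ i, φ i ∈ 𝒜 (d i))
    (hind : LinearIndependent k
      (fun α : Fin n →₀ ℕ => (List.ofFn fun i => φ i ^ α i).prod)) (u : ℕ) :
    finrank k
        ((Subalgebra.toSubmodule (Algebra.adjoin k (Set.range φ))) ⊓ 𝒜 u : Submodule k A) =
      pcount d n u := by
  have hind' : LinearIndependent k (fun α : Fin n →₀ ℕ => Mfun φ (α : Fin n → ℕ)) := hind
  rw [adjoin_eq_span_Mfun hcen,
    span_inf_graded 𝒜 (fun α : Fin n →₀ ℕ => Mfun φ (α : Fin n → ℕ)) (fun α => w d α)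
      (fun α => Mfun_mem_graded 𝒜 hmem α) u]
  have hfin : {α : Fin n →₀ ℕ | w d α = u}.Finite :=
    (finite_w_eq hd u (fun _ => True)).subset (fun α hα => ⟨trivial, hα⟩)
  rw [finrank_span_image hind' _ hfin, pcount]
  congr 1
  ext α
  simp only [Set.mem_setOf_eq]
  constructor
  · exact fun h => ⟨fun i hi => absurd hi (by have := i.2; omega), h⟩
  · exact fun h => h.2

lemma Ideal_eq_Imod (hcen : ∀ (i : Fin n) (x : A), φ i * x = x * φ i) :
    Submodule.span k {x : A | ∃ (i : Fin n) (a b : A), x = a * φ i * b} = Imod k φ n := by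
  apply le_antisymm
  · rw [Submodule.span_le]
    rintro x ⟨i, a, b, rfl⟩
    have : a * φ i * b = φ i * (a * b) := by rw [← hcen i a, mul_assoc]
    rw [this]
    exact Submodule.subset_span ⟨i, i.2, a * b, rfl⟩
  · rw [Imod, Submodule.span_le]
    rintro x ⟨i, -, c, rfl⟩
    exact Submodule.subset_span ⟨i, 1, c, by rw [one_mul]⟩

end Main

end S18

open Finset Module in
/-- The dimension identity (9) of Section 7: let `A = ⊕_{r≥0} A_r` be a graded `k`-algebra
with each `A_r` finite-dimensional and `A_0 = k`, and let `φ_1, …, φ_n` be central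
homogeneous elements of positive degree forming an `A`-regular sequence, algebraically
independent over `k` (the monomials in the `φ_i` are linearly independent), generating the
polynomial subalgebra `J = k[φ_1, …, φ_n]`.  With `J⁺` the positive-degree part of `J` and
`Ā = A/AJ⁺`, for every `r ≥ 0`:
`dim A_r = Σ_{u+v=r} (dim J_u) (dim Ā_v)`, where `dim J_u = dim (J ∩ A_u)` and
`dim Ā_v = dim A_v − dim (AJ⁺ ∩ A_v)`. -/
theorem statement18 (k A : Type) [Field k] [Ring A] [Algebra k A]
    (𝒜 : ℕ → Submodule k A) [GradedRing 𝒜]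
    (hfd : ∀ r, FiniteDimensional k (𝒜 r)) (h0 : 𝒜 0 = (1 : Submodule k A))
    (n : ℕ) (φ : Fin n → A)
    (hcen : ∀ (i : Fin n) (x : A), φ i * x = x * φ i)
    (d : Fin n → ℕ) (hd : ∀ i, 0 < d i) (hmem : ∀ i, φ i ∈ 𝒜 (d i))
    (hreg : ∀ (m : Fin n) (a : A),
      (∃ x : Fin n → A, φ m * a = ∑ i ∈ univ.filter (fun i => i < m), φ i * x i) →
      ∃ x : Fin n → A, a = ∑ i ∈ univ.filter (fun i => i < m), φ i * x i)
    (hind : LinearIndependent k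
      (fun α : Fin n →₀ ℕ => (List.ofFn fun i => φ i ^ α i).prod)) :
    ∀ r : ℕ,
      finrank k (𝒜 r) =
        ∑ u ∈ Finset.range (r + 1),
          finrank k
              ↥((Subalgebra.toSubmodule (Algebra.adjoin k (Set.range φ))) ⊓ 𝒜 u) *
            (finrank k (𝒜 (r - u)) -
              finrank k
                ↥((Submodule.span k {x : A | ∃ (i : Fin n) (a b : A), x = a * φ i * b}) ⊓
                  𝒜 (r - u))) := by
  intro r
  have hIeq := S18.Ideal_eq_Imod (k := k) (φ := φ) hcen
  rw [hIeq]
  have hmain := S18.main_ind 𝒜 hfd hcen hd hmem hreg n le_rfl r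
  have hle : ∀ v, finrank k (S18.Imod k φ n ⊓ 𝒜 v : Submodule k A) ≤ finrank k (𝒜 v) := by
    intro v
    haveI := hfd v
    rw [← (Submodule.comapSubtypeEquivOfLe
      (inf_le_right : S18.Imod k φ n ⊓ 𝒜 v ≤ 𝒜 v)).finrank_eq]
    exact Submodule.finrank_le _
  have key : (finrank k (𝒜 r) : ℤ) =
      ((∑ u ∈ Finset.range (r + 1),
        finrank k
            ((Subalgebra.toSubmodule (Algebra.adjoin k (Set.range φ))) ⊓ 𝒜 u : Submodule k A) *
          (finrank k (𝒜 (r - u)) -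
            finrank k (S18.Imod k φ n ⊓ 𝒜 (r - u) : Submodule k A)) : ℕ) : ℤ) := by
    rw [Nat.cast_sum, hmain]
    apply Finset.sum_congr rfl
    intro u hu
    rw [Nat.cast_mul, Nat.cast_sub (hle (r - u)), S18.Jdim 𝒜 hcen hd hmem hind u]
  exact Nat.cast_injective key
end

section
/- Let k be a field and A = ⊕_{r≥0} A_r a graded associative unital k-algebra with each A_r finite-dimensional and A_0 = k. Let φ_1, …, φ_n be central homogeneous elements of positive degree forming an A-regular sequence, algebraically independent over k, and let J = k[φ_1, …, φ_n] be the (graded polynomial) subalgebra they generate, with J⁺ its positive-degree part. For each r ≥ 0 choose a subspace H_r of A_r with A_r = H_r ⊕ (AJ⁺)_r, and set H = ⊕_{r≥0} H_r. Then the multiplication map J ⊗_k H → A, c ⊗ h ↦ ch, is a k-linear isomorphism; in particular, A is a free J-module. -/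
open scoped TensorProduct

open Finset Module

namespace S19

variable {k A : Type} [Field k] [Ring A] [Algebra k A]
variable {n : ℕ} (φ : Fin n → A)

/-- ordered monomial in the `φ i`. -/
noncomputable def mon (α : Fin n →₀ ℕ) : A := (List.ofFn fun i => φ i ^ α i).prod

/-- weighted degree -/
def w (d : Fin n → ℕ) (α : Fin n →₀ ℕ) : ℕ := ∑ i, α i * d i

theorem w_add (d : Fin n → ℕ) (α β : Fin n →₀ ℕ) : w d (α + β) = w d α + w d β := by
  simp [w, add_mul, Finset.sum_add_distrib]

theorem w_single (d : Fin n → ℕ) (m : Fin n) (c : ℕ) : w d (Finsupp.single m c) = c * d m := by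
  rw [w, Finset.sum_eq_single m]
  · simp
  · intro b _ hb
    rw [Finsupp.single_eq_of_ne' (Ne.symm hb), zero_mul]
  · simp

theorem mon_zero : mon φ 0 = 1 := by
  apply List.prod_eq_one
  intro x hx
  rw [List.mem_ofFn] at hx
  obtain ⟨i, rfl⟩ := hx
  simp

theorem update_prod (f : Fin n → A) (m : Fin n) (c : A) (hc : ∀ x : A, c * x = x * c) :
    (List.ofFn (Function.update f m (c * f m))).prod = c * (List.ofFn f).prod := by
  have hset : List.ofFn (Function.update f m (c * f m)) = (List.ofFn f).set m (c * f m) := by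
    apply List.ext_getElem
    · simp
    · intro i h1 h2
      rw [List.getElem_ofFn, List.getElem_set]
      by_cases hi : (m : ℕ) = i
      · rw [if_pos hi, Function.update_apply, if_pos (Fin.ext hi.symm)]
      · rw [if_neg hi, List.getElem_ofFn, Function.update_apply,
          if_neg (fun h => hi ((congrArg Fin.val h).symm))]
  rw [hset, List.prod_set]
  have hm : (m : ℕ) < (List.ofFn f).length := by simp [m.2]
  rw [if_pos hm]
  have hdrop : (List.ofFn f).drop (m : ℕ) = f m :: (List.ofFn f).drop ((m : ℕ) + 1) := by
    rw [List.drop_eq_getElem_cons hm, List.getElem_ofFn]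
  have hLP : (List.ofFn f).prod =
      ((List.ofFn f).take (m : ℕ)).prod * (f m * ((List.ofFn f).drop ((m : ℕ) + 1)).prod) := by
    rw [← List.prod_take_mul_prod_drop (List.ofFn f) (m : ℕ), hdrop, List.prod_cons]
  rw [hLP]
  simp only [← mul_assoc]
  rw [← hc (((List.ofFn f).take (m : ℕ)).prod)]

theorem mon_add_single_one (hcen : ∀ (i : Fin n) (x : A), φ i * x = x * φ i)
    (γ : Fin n →₀ ℕ) (m : Fin n) :
    mon φ (γ + Finsupp.single m 1) = φ m * mon φ γ := by
  have hfun : (fun i => φ i ^ ((γ + Finsupp.single m 1 : Fin n →₀ ℕ) i)) =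
      Function.update (fun i => φ i ^ γ i) m (φ m * φ m ^ γ m) := by
    funext i
    by_cases hi : i = m
    · subst hi; simp [pow_succ', Finsupp.single_apply]
    · rw [Function.update_apply, if_neg hi]
      simp [Finsupp.single_apply, Ne.symm hi]
  rw [mon, hfun, update_prod _ m (φ m) (hcen m), ← mon]

theorem mon_add_single (hcen : ∀ (i : Fin n) (x : A), φ i * x = x * φ i)
    (γ : Fin n →₀ ℕ) (m : Fin n) (c : ℕ) :
    mon φ (γ + Finsupp.single m c) = φ m ^ c * mon φ γ := by
  induction c with
  | zero => simp
  | succ c ih =>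
      have : (Finsupp.single m (c + 1) : Fin n →₀ ℕ) = Finsupp.single m c + Finsupp.single m 1 := by
        rw [← Finsupp.single_add]
      rw [this, ← add_assoc, mon_add_single_one φ hcen, ih, pow_succ']
      rw [mul_assoc]

theorem mon_single (hcen : ∀ (i : Fin n) (x : A), φ i * x = x * φ i) (m : Fin n) (c : ℕ) :
    mon φ (Finsupp.single m c) = φ m ^ c := by
  have := mon_add_single φ hcen 0 m c
  rwa [zero_add, mon_zero, mul_one] at this

theorem mon_add (hcen : ∀ (i : Fin n) (x : A), φ i * x = x * φ i) (α β : Fin n →₀ ℕ) :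
    mon φ (α + β) = mon φ β * mon φ α := by
  induction β using Finsupp.induction with
  | zero => simp [mon_zero]
  | single_add m c β hm hc ih =>
      rw [add_comm (Finsupp.single m c) β, ← add_assoc, mon_add_single φ hcen (α + β) m c, ih,
        mon_add_single φ hcen β m c, mul_assoc]

end S19

namespace S19

variable {k A : Type} [Field k] [Ring A] [Algebra k A]
variable {n : ℕ} (φ : Fin n → A)

variable (k) in
/-- The linear map `(f i)_i ↦ ∑_{i < m} φ i * f i`. -/
noncomputable def Fm (m : ℕ) : (Fin n → A) →ₗ[k] A where
  toFun f := ∑ i ∈ univ.filter (fun i : Fin n => (i : ℕ) < m), φ i * f i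
  map_add' f g := by simp [mul_add, Finset.sum_add_distrib]
  map_smul' c f := by simp [Finset.smul_sum, mul_smul_comm]

variable (k) in
/-- The ideal `φ 0 * A + ⋯ + φ (m-1) * A`. -/
noncomputable def Im (m : ℕ) : Submodule k A := LinearMap.range (Fm k φ m)

theorem mem_Im_iff {m : ℕ} {x : A} : x ∈ Im k φ m ↔
    ∃ f : Fin n → A, x = ∑ i ∈ univ.filter (fun i : Fin n => (i : ℕ) < m), φ i * f i := by
  constructor
  · rintro ⟨f, rfl⟩; exact ⟨f, rfl⟩
  · rintro ⟨f, rfl⟩; exact ⟨f, rfl⟩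

theorem Im_mono {m m' : ℕ} (h : m ≤ m') : Im k φ m ≤ Im k φ m' := by
  rintro x ⟨f, rfl⟩
  refine ⟨fun i => if (i : ℕ) < m then f i else 0, ?_⟩
  show ∑ i ∈ univ.filter (fun i : Fin n => (i : ℕ) < m'),
      (φ i * if (i : ℕ) < m then f i else 0) =
    ∑ i ∈ univ.filter (fun i : Fin n => (i : ℕ) < m), φ i * f i
  have hsub : univ.filter (fun i : Fin n => (i : ℕ) < m) ⊆
      univ.filter (fun i : Fin n => (i : ℕ) < m') := by
    intro i hi
    simp only [Finset.mem_filter, Finset.mem_univ, true_and] at *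
    omega
  rw [← Finset.sum_subset hsub (fun i _ hi => by
    simp only [Finset.mem_filter, Finset.mem_univ, true_and] at hi
    rw [if_neg hi, mul_zero])]
  exact Finset.sum_congr rfl (fun i hi => by
    simp only [Finset.mem_filter, Finset.mem_univ, true_and] at hi
    rw [if_pos hi])

theorem Im_stable {m : ℕ} (h : n ≤ m) : Im k φ m = Im k φ n := by
  have : (univ.filter fun i : Fin n => (i : ℕ) < m) = univ.filter fun i : Fin n => (i : ℕ) < n := by
    ext i
    simp only [Finset.mem_filter, Finset.mem_univ, true_and]
    exact ⟨fun _ => i.2, fun _ => lt_of_lt_of_le i.2 h⟩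
  unfold Im Fm
  simp_rw [this]

theorem phi_mul_mem_Im (i : Fin n) (z : A) : φ i * z ∈ Im k φ ((i : ℕ) + 1) := by
  refine ⟨fun j => if j = i then z else 0, ?_⟩
  show ∑ j ∈ univ.filter (fun j : Fin n => (j : ℕ) < (i : ℕ) + 1), φ j * _ = φ i * z
  rw [Finset.sum_eq_single_of_mem i (by simp)]
  · rw [if_pos rfl]
  · intro j _ hj; rw [if_neg hj, mul_zero]

theorem Im_zero_eq : Im k φ 0 = ⊥ := by
  rw [eq_bot_iff]
  rintro x ⟨f, rfl⟩
  show ∑ i ∈ univ.filter (fun i : Fin n => (i : ℕ) < 0), φ i * f i ∈ (⊥ : Submodule k A)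
  simp

theorem Ihat_eq (hcen : ∀ (i : Fin n) (x : A), φ i * x = x * φ i) :
    Submodule.span k {x : A | ∃ (i : Fin n) (a b : A), x = a * φ i * b} = Im k φ n := by
  apply le_antisymm
  · rw [Submodule.span_le]
    rintro x ⟨i, a, b, rfl⟩
    have : a * φ i * b = φ i * (a * b) := by rw [← hcen i a, mul_assoc]
    rw [this]
    exact Im_mono φ i.2 (phi_mul_mem_Im φ i (a * b))
  · rintro x ⟨f, rfl⟩
    show ∑ i ∈ univ.filter (fun i : Fin n => (i : ℕ) < n), φ i * f i ∈ _
    refine Submodule.sum_mem _ (fun i _ => Submodule.subset_span ⟨i, 1, f i, by rw [one_mul]⟩)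

theorem regs (hreg : ∀ (m : Fin n) (a : A),
      (∃ x : Fin n → A, φ m * a = ∑ i ∈ univ.filter (fun i => i < m), φ i * x i) →
      ∃ x : Fin n → A, a = ∑ i ∈ univ.filter (fun i => i < m), φ i * x i)
    (m : Fin n) (z : A) (hz : φ m * z ∈ Im k φ (m : ℕ)) : z ∈ Im k φ (m : ℕ) := by
  have hfil : (univ.filter fun i : Fin n => i < m) =
      univ.filter fun i : Fin n => (i : ℕ) < (m : ℕ) := by
    ext i
    simp only [Finset.mem_filter, Finset.mem_univ, true_and, Fin.lt_def]
  rw [mem_Im_iff] at hz ⊢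
  obtain ⟨f, hf⟩ := hz
  obtain ⟨x, hx⟩ := hreg m z ⟨f, by rw [hfil]; exact hf⟩
  exact ⟨x, by rw [← hfil]; exact hx⟩

theorem Im_graded (𝒜 : ℕ → Submodule k A) [GradedRing 𝒜] (d : Fin n → ℕ)
    (hmem : ∀ i, φ i ∈ 𝒜 (d i)) (M r : ℕ) (x : A) (hx : x ∈ Im k φ M) (hxr : x ∈ 𝒜 r) :
    ∃ f : Fin n → A, (∀ i, f i ∈ 𝒜 (r - d i)) ∧ (∀ i, r < d i → f i = 0) ∧
      x = ∑ i ∈ univ.filter (fun i : Fin n => (i : ℕ) < M), φ i * f i := by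
  rw [mem_Im_iff] at hx
  obtain ⟨g, hg⟩ := hx
  refine ⟨fun i => if d i ≤ r then (DirectSum.decompose 𝒜 (g i) (r - d i) : A) else 0,
    fun i => ?_, fun i h => ?_, ?_⟩
  · dsimp only
    by_cases h : d i ≤ r
    · rw [if_pos h]; exact SetLike.coe_mem _
    · rw [if_neg h]; exact Submodule.zero_mem _
  · dsimp only
    rw [if_neg (not_le.2 h)]
  · have hxd : x = (DirectSum.decompose 𝒜 x r : A) :=
      (DirectSum.decompose_of_mem_same 𝒜 hxr).symm
    conv_lhs => rw [hxd, hg]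
    rw [DirectSum.decompose_sum]
    rw [DFinsupp.finset_sum_apply, AddSubmonoidClass.coe_finset_sum]
    refine Finset.sum_congr rfl (fun i _ => ?_)
    dsimp only
    by_cases h : d i ≤ r
    · rw [if_pos h, DirectSum.coe_decompose_mul_of_left_mem_of_le 𝒜 (hmem i) h]
    · rw [if_neg h, DirectSum.coe_decompose_mul_of_left_mem_of_not_le 𝒜 (hmem i) h, mul_zero]

end S19

namespace S19

variable {k A : Type} [Field k] [Ring A] [Algebra k A]
variable {n : ℕ} (φ : Fin n → A)

theorem mon_mem (𝒜 : ℕ → Submodule k A) [GradedRing 𝒜] (d : Fin n → ℕ)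
    (hcen : ∀ (i : Fin n) (x : A), φ i * x = x * φ i)
    (hmem : ∀ i, φ i ∈ 𝒜 (d i)) (α : Fin n →₀ ℕ) : mon φ α ∈ 𝒜 (w d α) := by
  induction α using Finsupp.induction with
  | zero =>
      rw [mon_zero]
      have : w d 0 = 0 := by simp [w]
      rw [this]
      exact SetLike.one_mem_graded 𝒜
  | single_add m c β hm hc ih =>
      rw [add_comm (Finsupp.single m c) β, mon_add_single φ hcen β m c]
      have hw : w d (β + Finsupp.single m c) = c * d m + w d β := by
        rw [w_add, w_single]; ring
      rw [hw]
      have hpow : φ m ^ c ∈ 𝒜 (c * d m) := by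
        have := SetLike.pow_mem_graded c (hmem m)
        rwa [smul_eq_mul] at this
      exact SetLike.mul_mem_graded hpow ih

theorem mul_top (𝒜 : ℕ → Submodule k A) [GradedRing 𝒜] (d : Fin n → ℕ)
    (hcen : ∀ (i : Fin n) (x : A), φ i * x = x * φ i)
    (hd : ∀ i, 0 < d i) (hmem : ∀ i, φ i ∈ 𝒜 (d i))
    (H : ℕ → Submodule k A)
    (hsup : ∀ r, H r ⊔
      ((Submodule.span k {x : A | ∃ (i : Fin n) (a b : A), x = a * φ i * b}) ⊓ 𝒜 r) = 𝒜 r) :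
    Subalgebra.toSubmodule (Algebra.adjoin k (Set.range φ)) * (⨆ r, H r) = ⊤ := by
  set J := Subalgebra.toSubmodule (Algebra.adjoin k (Set.range φ)) with hJ
  set H' := ⨆ r, H r with hH'
  have hJJ : J * J ≤ J := by
    rw [Submodule.mul_le]
    intro a ha b hb
    show a * b ∈ Algebra.adjoin k (Set.range φ)
    exact mul_mem (show a ∈ Algebra.adjoin k (Set.range φ) from ha)
      (show b ∈ Algebra.adjoin k (Set.range φ) from hb)
  have key : ∀ r, 𝒜 r ≤ J * H' := by
    intro r
    induction r using Nat.strong_induction_on with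
    | _ r IH =>
      intro x hx
      rw [← hsup r] at hx
      obtain ⟨h1, hh1, y, hy, rfl⟩ := Submodule.mem_sup.1 hx
      have hyI : y ∈ Im k φ n := by rw [← Ihat_eq φ hcen]; exact hy.1
      obtain ⟨f, hf1, hf2, rfl⟩ := Im_graded φ 𝒜 d hmem n r y hyI hy.2
      refine add_mem ?_ (Submodule.sum_mem _ fun i _ => ?_)
      · have h1H : h1 ∈ H' := le_iSup H r hh1
        have hone : (1 : A) ∈ J := one_mem (Algebra.adjoin k (Set.range φ))
        simpa using Submodule.mul_mem_mul hone h1H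
      · by_cases hdi : d i ≤ r
        · have hir : r - d i < r := by have := hd i; omega
          have hfJ : f i ∈ J * H' := IH _ hir (hf1 i)
          have hφJ : φ i ∈ J := Algebra.subset_adjoin ⟨i, rfl⟩
          have h2 : φ i * f i ∈ J * (J * H') := Submodule.mul_mem_mul hφJ hfJ
          have hassoc : J * (J * H') ≤ J * H' := by
            rw [← mul_assoc]
            exact mul_le_mul' hJJ le_rfl
          exact hassoc h2
        · rw [hf2 i (by omega), mul_zero]
          exact zero_mem _
  refine le_antisymm le_top ?_
  rw [← (DirectSum.Decomposition.isInternal 𝒜).submodule_iSup_eq_top]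
  exact iSup_le key

end S19

namespace S19

variable {k A : Type} [Field k] [Ring A] [Algebra k A]
variable {n : ℕ} (φ : Fin n → A)

theorem finsupp_factor {σ τ M : Type*} [Zero M] (e : σ ↪ τ) (l : τ →₀ M)
    (h : ∀ x ∈ l.support, x ∈ Set.range e) : ∃ l' : σ →₀ M, l = Finsupp.embDomain e l' := by
  classical
  refine ⟨Finsupp.comapDomain e l (e.injective.injOn), ?_⟩
  ext t
  by_cases ht : t ∈ Set.range e
  · obtain ⟨s, rfl⟩ := ht
    rw [Finsupp.embDomain_apply_self, Finsupp.comapDomain_apply]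
  · rw [Finsupp.embDomain_notin_range _ _ _ ht]
    by_contra hne
    exact ht (h t (Finsupp.mem_support_iff.2 hne))

theorem indep_aux (𝒜 : ℕ → Submodule k A) [GradedRing 𝒜] (d : Fin n → ℕ)
    (hcen : ∀ (i : Fin n) (x : A), φ i * x = x * φ i)
    (hd : ∀ i, 0 < d i) (hmem : ∀ i, φ i ∈ 𝒜 (d i))
    (hreg : ∀ (m : Fin n) (a : A),
      (∃ x : Fin n → A, φ m * a = ∑ i ∈ univ.filter (fun i => i < m), φ i * x i) →
      ∃ x : Fin n → A, a = ∑ i ∈ univ.filter (fun i => i < m), φ i * x i)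
    (H : ℕ → Submodule k A) (hle : ∀ r, H r ≤ 𝒜 r)
    (hdisj : ∀ r, H r ⊓
      ((Submodule.span k {x : A | ∃ (i : Fin n) (a b : A), x = a * φ i * b}) ⊓ 𝒜 r) = ⊥)
    {ι : Type} (hv : ι → A) (hdeg : ι → ℕ) (hhv : ∀ s, hv s ∈ H (hdeg s))
    (hbasis : ∀ (r : ℕ) (l : ι →₀ k), (∀ s ∈ l.support, hdeg s = r) →
      Finsupp.linearCombination k hv l = 0 → l = 0) :
    ∀ (r m : ℕ) (l : ((Fin n →₀ ℕ) × ι) →₀ k),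
      (∀ p ∈ l.support, w d p.1 + hdeg p.2 = r) →
      (∀ p ∈ l.support, ∀ i : Fin n, (i : ℕ) < m → p.1 i = 0) →
      Finsupp.linearCombination k (fun p : (Fin n →₀ ℕ) × ι => mon φ p.1 * hv p.2) l ∈ Im k φ m →
      l = 0 := by
  classical
  set Fam : (Fin n →₀ ℕ) × ι → A := fun p => mon φ p.1 * hv p.2 with hFam
  intro r
  induction r using Nat.strong_induction_on with
  | _ r IHr =>
  suffices hsuf : ∀ t (m : ℕ), n ≤ m + t → ∀ l : ((Fin n →₀ ℕ) × ι) →₀ k,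
      (∀ p ∈ l.support, w d p.1 + hdeg p.2 = r) →
      (∀ p ∈ l.support, ∀ i : Fin n, (i : ℕ) < m → p.1 i = 0) →
      Finsupp.linearCombination k Fam l ∈ Im k φ m → l = 0 by
    intro m l h1 h2 h3
    exact hsuf n m (by omega) l h1 h2 h3
  intro t
  induction t with
  | zero =>
    intro m hm l h1 h2 h3
    rw [Nat.add_zero] at hm
    -- base case : m ≥ n, all exponents vanish
    have hzero : ∀ p ∈ l.support, p.1 = (0 : Fin n →₀ ℕ) := by
      intro p hp
      ext i
      exact h2 p hp i (lt_of_lt_of_le i.2 hm)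
    set e : ι ↪ (Fin n →₀ ℕ) × ι :=
      ⟨fun s => (0, s), fun s1 s2 hs => congrArg Prod.snd hs⟩ with he
    obtain ⟨l', rfl⟩ := finsupp_factor e l (fun p hp => ⟨p.2, by
      rw [he]; exact Prod.ext (hzero p hp).symm rfl⟩)
    have hcomp : Fam ∘ e = hv := by
      funext s
      show mon φ 0 * hv s = hv s
      rw [mon_zero, one_mul]
    have hLC : Finsupp.linearCombination k Fam (Finsupp.embDomain e l') =
        Finsupp.linearCombination k hv l' := by
      rw [Finsupp.linearCombination_embDomain, hcomp]
    have hsupp' : ∀ s ∈ l'.support, hdeg s = r := by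
      intro s hs
      have : e s ∈ (Finsupp.embDomain e l').support := by
        rw [Finsupp.support_embDomain, Finset.mem_map]
        exact ⟨s, hs, rfl⟩
      have h1' := h1 _ this
      have hw0 : w d (0 : Fin n →₀ ℕ) = 0 := by simp [w]
      show hdeg s = r
      have : w d (0 : Fin n →₀ ℕ) + hdeg s = r := h1'
      omega
    have hmemH : Finsupp.linearCombination k hv l' ∈ H r := by
      rw [Finsupp.linearCombination_apply]
      refine Submodule.finsuppSum_mem k (H r) l' (fun s c => c • hv s) (fun s hs => ?_)
      have := hhv s
      rw [hsupp' s (Finsupp.mem_support_iff.2 hs)] at this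
      exact Submodule.smul_mem _ _ this
    have hv0 : Finsupp.linearCombination k hv l' = 0 := by
      have hIm : Finsupp.linearCombination k hv l' ∈ Im k φ n := by
        rw [← hLC]
        rw [Im_stable φ hm] at h3
        exact h3
      have : Finsupp.linearCombination k hv l' ∈ H r ⊓
          ((Submodule.span k {x : A | ∃ (i : Fin n) (a b : A), x = a * φ i * b}) ⊓ 𝒜 r) := by
        refine ⟨hmemH, ?_, hle r hmemH⟩
        rw [Ihat_eq φ hcen]
        exact hIm
      rw [hdisj r] at this
      exact this
    rw [hbasis r l' hsupp' hv0, Finsupp.embDomain_zero]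
  | succ t IHt =>
    intro m hm l h1 h2 h3
    by_cases hmn : n ≤ m
    · exact IHt m (by omega) l h1 h2 h3
    push_neg at hmn
    set m' : Fin n := ⟨m, hmn⟩ with hm'
    set P : (Fin n →₀ ℕ) × ι → Prop := fun p => p.1 m' = 0 with hP
    set l₀ := l.filter P with hl₀
    set l₁ := l.filter (fun p => ¬ P p) with hl₁
    have hsplit : l₀ + l₁ = l := Finsupp.filter_pos_add_filter_neg l P
    set τ : (Fin n →₀ ℕ) × ι ↪ (Fin n →₀ ℕ) × ι :=
      ⟨fun p => (p.1 + Finsupp.single m' 1, p.2), by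
        rintro ⟨a1, a2⟩ ⟨b1, b2⟩ hab
        simp only [Prod.mk.injEq] at hab
        exact Prod.ext (add_right_cancel hab.1) hab.2⟩ with hτ
    have hrange : ∀ p ∈ l₁.support, p ∈ Set.range τ := by
      intro p hp
      have hpP : ¬ P p := by
        rw [hl₁, Finsupp.support_filter, Finset.mem_filter] at hp
        exact hp.2
      refine ⟨(p.1 - Finsupp.single m' 1, p.2), ?_⟩
      rw [hτ]
      refine Prod.ext ?_ rfl
      show p.1 - Finsupp.single m' 1 + Finsupp.single m' 1 = p.1
      ext i
      rw [Finsupp.add_apply, Finsupp.tsub_apply]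
      by_cases hi : i = m'
      · rw [hi, Finsupp.single_eq_same]
        have hne : p.1 m' ≠ 0 := hpP
        omega
      · rw [Finsupp.single_eq_of_ne' (fun hh => hi hh.symm)]
        simp
    obtain ⟨l', hl'⟩ := finsupp_factor τ l₁ hrange
    have hl₁supp : l₁.support ⊆ l.support := by
      rw [hl₁, Finsupp.support_filter]
      exact Finset.filter_subset _ _
    have hLCl₁ : Finsupp.linearCombination k Fam l₁ =
        φ m' * Finsupp.linearCombination k Fam l' := by
      rw [hl', Finsupp.linearCombination_embDomain]
      rw [Finsupp.linearCombination_apply, Finsupp.linearCombination_apply, Finsupp.mul_sum]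
      refine Finsupp.sum_congr (fun q hq => ?_)
      have hFq : Fam (τ q) = φ m' * Fam q := by
        show mon φ (q.1 + Finsupp.single m' 1) * hv q.2 = φ m' * (mon φ q.1 * hv q.2)
        rw [mon_add_single_one φ hcen, mul_assoc]
      show l' q • Fam (τ q) = φ m' * (l' q • Fam q)
      rw [hFq, mul_smul_comm]
    have hy : Finsupp.linearCombination k Fam l₀ ∈ Im k φ (m + 1) := by
      have h3' : Finsupp.linearCombination k Fam l ∈ Im k φ (m + 1) :=
        Im_mono φ (Nat.le_succ m) h3
      have hl1m : Finsupp.linearCombination k Fam l₁ ∈ Im k φ (m + 1) := by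
        rw [hLCl₁]
        exact phi_mul_mem_Im φ m' _
      have : Finsupp.linearCombination k Fam l₀ =
          Finsupp.linearCombination k Fam l - Finsupp.linearCombination k Fam l₁ := by
        rw [← hsplit, map_add, add_sub_cancel_right]
      rw [this]
      exact sub_mem h3' hl1m
    have hl₀0 : l₀ = 0 := by
      refine IHt (m + 1) (by omega) l₀ ?_ ?_ hy
      · intro p hp
        exact h1 p (by
          rw [hl₀, Finsupp.support_filter] at hp
          exact Finset.filter_subset _ _ hp)
      · intro p hp i hi
        rw [hl₀, Finsupp.support_filter, Finset.mem_filter] at hp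
        rcases Nat.lt_succ_iff_lt_or_eq.1 hi with hlt | heq
        · exact h2 p hp.1 i hlt
        · have : i = m' := Fin.ext heq
          rw [this]
          exact hp.2
    have hll₁ : l = l₁ := by rw [← hsplit, hl₀0, zero_add]
    have hLCl' : Finsupp.linearCombination k Fam l' ∈ Im k φ m := by
      have : φ m' * Finsupp.linearCombination k Fam l' ∈ Im k φ (m' : ℕ) := by
        rw [← hLCl₁, ← hll₁]
        exact h3
      exact regs φ hreg m' _ this
    by_cases hl'0 : l' = 0
    · rw [hll₁, hl', hl'0, Finsupp.embDomain_zero]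
    obtain ⟨q0, hq0⟩ := Finsupp.support_nonempty_iff.2 hl'0
    have hτsupp : ∀ q ∈ l'.support, τ q ∈ l.support := by
      intro q hq
      apply hl₁supp
      rw [hl', Finsupp.support_embDomain, Finset.mem_map]
      exact ⟨q, hq, rfl⟩
    have hwq : ∀ q ∈ l'.support, w d q.1 + d m' + hdeg q.2 = r := by
      intro q hq
      have := h1 _ (hτsupp q hq)
      have hww : w d (q.1 + Finsupp.single m' 1) = w d q.1 + d m' := by
        rw [w_add, w_single, one_mul]
      show w d q.1 + d m' + hdeg q.2 = r
      rw [← hww]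
      exact this
    have hrlt : r - d m' < r := by
      have := hwq q0 hq0
      have := hd m'
      omega
    have hl'eq : l' = 0 := by
      refine IHr (r - d m') hrlt m l' ?_ ?_ hLCl'
      · intro q hq
        have := hwq q hq
        have := hd m'
        omega
      · intro q hq i hi
        have := h2 _ (hτsupp q hq) i hi
        have : q.1 i + Finsupp.single m' 1 i = 0 := this
        have hne : i ≠ m' := by
          intro hh
          rw [hh] at hi
          exact absurd hi (lt_irrefl _)
        rw [Finsupp.single_eq_of_ne' (fun hh => hne hh.symm)] at this
        omega
    exact absurd hl'eq hl'0

end S19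

namespace S19

variable {k A : Type} [Field k] [Ring A] [Algebra k A]
variable {n : ℕ} (φ : Fin n → A)

noncomputable def basisOfSpan {ι : Type} (p : Submodule k A) (v : ι → A)
    (hmem : ∀ i, v i ∈ p) (hind : LinearIndependent k v)
    (hspan : p ≤ Submodule.span k (Set.range v)) : Basis ι k ↥p := by
  refine Basis.mk (v := fun i => (⟨v i, hmem i⟩ : ↥p)) (LinearIndependent.of_comp p.subtype ?_) ?_
  · exact hind
  · have key : ∀ y (_ : y ∈ Submodule.span k (Set.range v)), ∀ hyp : y ∈ p,
        (⟨y, hyp⟩ : ↥p) ∈ Submodule.span k (Set.range fun i => (⟨v i, hmem i⟩ : ↥p)) := by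
      intro y hy
      induction hy using Submodule.span_induction with
      | mem x hx =>
          intro hyp
          obtain ⟨i, rfl⟩ := hx
          exact Submodule.subset_span ⟨i, rfl⟩
      | zero =>
          intro hyp
          have : (⟨0, hyp⟩ : ↥p) = 0 := by ext; rfl
          rw [this]; exact Submodule.zero_mem _
      | add x y hx hy ihx ihy =>
          intro hyp
          have hxp : x ∈ p := Submodule.span_le.2 (Set.range_subset_iff.2 hmem) hx
          have hyp' : y ∈ p := Submodule.span_le.2 (Set.range_subset_iff.2 hmem) hy
          have : (⟨x + y, hyp⟩ : ↥p) = ⟨x, hxp⟩ + ⟨y, hyp'⟩ := by ext; rfl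
          rw [this]; exact Submodule.add_mem _ (ihx hxp) (ihy hyp')
      | smul a x hx ihx =>
          intro hyp
          have hxp : x ∈ p := Submodule.span_le.2 (Set.range_subset_iff.2 hmem) hx
          have : (⟨a • x, hyp⟩ : ↥p) = a • ⟨x, hxp⟩ := by ext; rfl
          rw [this]; exact Submodule.smul_mem _ _ (ihx hxp)
    intro x _
    have := key (↑x) (hspan x.2) x.2
    simpa using this

theorem basisOfSpan_apply {ι : Type} (p : Submodule k A) (v : ι → A)
    (hmem : ∀ i, v i ∈ p) (hind : LinearIndependent k v)
    (hspan : p ≤ Submodule.span k (Set.range v)) (i : ι) :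
    (basisOfSpan p v hmem hind hspan i : A) = v i := by
  rw [basisOfSpan, Basis.mk_apply]

theorem span_mon (hcen : ∀ (i : Fin n) (x : A), φ i * x = x * φ i) :
    Subalgebra.toSubmodule (Algebra.adjoin k (Set.range φ)) =
      Submodule.span k (Set.range (mon φ)) := by
  apply le_antisymm
  · rw [Algebra.adjoin_eq_span]
    rw [Submodule.span_le]
    intro x hx
    have hmul : Submodule.span k (Set.range (mon φ)) * Submodule.span k (Set.range (mon φ)) ≤
        Submodule.span k (Set.range (mon φ)) := by
      rw [Submodule.span_mul_span]
      rw [Submodule.span_le]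
      rintro z ⟨z1, hz1, z2, hz2, rfl⟩
      obtain ⟨α, rfl⟩ := hz1
      obtain ⟨β, rfl⟩ := hz2
      exact Submodule.subset_span ⟨β + α, mon_add φ hcen β α⟩
    induction hx using Submonoid.closure_induction with
    | mem y hy =>
        obtain ⟨i, rfl⟩ := hy
        exact Submodule.subset_span ⟨Finsupp.single i 1, by rw [mon_single φ hcen, pow_one]⟩
    | one => exact Submodule.subset_span ⟨0, mon_zero φ⟩
    | mul y z hy hz ihy ihz => exact hmul (Submodule.mul_mem_mul ihy ihz)
  · rw [Submodule.span_le]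
    rintro x ⟨α, rfl⟩
    show mon φ α ∈ Algebra.adjoin k (Set.range φ)
    apply list_prod_mem
    intro y hy
    rw [List.mem_ofFn] at hy
    obtain ⟨i, rfl⟩ := hy
    exact pow_mem (Algebra.subset_adjoin (show φ i ∈ Set.range φ from ⟨i, rfl⟩)) _

end S19

open Finset Module in
/-- Proposition 7.8: let `A = ⊕_{r≥0} A_r` be a graded `k`-algebra with each `A_r`
finite-dimensional and `A_0 = k`, and let `φ_1, …, φ_n` be central homogeneous elements of
positive degree forming an `A`-regular sequence, algebraically independent over `k`,
generating the polynomial subalgebra `J = k[φ_1, …, φ_n]` with positive part `J⁺`.  If for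
each `r` the subspace `H_r ⊆ A_r` is a complement of `(AJ⁺)_r = AJ⁺ ∩ A_r` in `A_r`, and
`H = ⊕_{r≥0} H_r`, then the multiplication map `J ⊗_k H → A` is a `k`-linear isomorphism;
in particular `A` is a free `J`-module. -/
theorem statement19 (k A : Type) [Field k] [Ring A] [Algebra k A]
    (𝒜 : ℕ → Submodule k A) [GradedRing 𝒜]
    (hfd : ∀ r, FiniteDimensional k (𝒜 r)) (h0 : 𝒜 0 = (1 : Submodule k A))
    (n : ℕ) (φ : Fin n → A)
    (hcen : ∀ (i : Fin n) (x : A), φ i * x = x * φ i)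
    (d : Fin n → ℕ) (hd : ∀ i, 0 < d i) (hmem : ∀ i, φ i ∈ 𝒜 (d i))
    (hreg : ∀ (m : Fin n) (a : A),
      (∃ x : Fin n → A, φ m * a = ∑ i ∈ univ.filter (fun i => i < m), φ i * x i) →
      ∃ x : Fin n → A, a = ∑ i ∈ univ.filter (fun i => i < m), φ i * x i)
    (hind : LinearIndependent k
      (fun α : Fin n →₀ ℕ => (List.ofFn fun i => φ i ^ α i).prod))
    (H : ℕ → Submodule k A) (hle : ∀ r, H r ≤ 𝒜 r)
    (hdisj : ∀ r, H r ⊓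
      ((Submodule.span k {x : A | ∃ (i : Fin n) (a b : A), x = a * φ i * b}) ⊓ 𝒜 r) = ⊥)
    (hsup : ∀ r, H r ⊔
      ((Submodule.span k {x : A | ∃ (i : Fin n) (a b : A), x = a * φ i * b}) ⊓ 𝒜 r) = 𝒜 r) :
    Function.Bijective
        (Submodule.mulMap (Subalgebra.toSubmodule (Algebra.adjoin k (Set.range φ)))
          (⨆ r, H r)) ∧
      Module.Free (Algebra.adjoin k (Set.range φ)) A := by
  classical
  set JS := Subalgebra.toSubmodule (Algebra.adjoin k (Set.range φ)) with hJS
  set H' : Submodule k A := ⨆ r, H r with hH'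
  have hfdH : ∀ r, FiniteDimensional k (H r) := fun r =>
    letI := hfd r
    Submodule.finiteDimensional_of_le (hle r)
  let bHr : ∀ r : ℕ, Basis (Fin (finrank k (H r))) k (H r) := fun r =>
    letI := hfdH r
    Module.finBasis k (H r)
  let ι : Type := Σ r : ℕ, Fin (finrank k (H r))
  let hv : ι → A := fun s => ((bHr s.1) s.2 : A)
  have hhv : ∀ s : ι, hv s ∈ H s.1 := fun s => ((bHr s.1) s.2).2
  -- degreewise independence of the `hv`
  have hbasis : ∀ (r : ℕ) (l : ι →₀ k), (∀ s ∈ l.support, s.1 = r) →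
      Finsupp.linearCombination k hv l = 0 → l = 0 := by
    intro r l hsupp hsum
    set e : Fin (finrank k (H r)) ↪ ι := ⟨fun j => ⟨r, j⟩, fun a b hab => by
      have := Sigma.mk.inj_iff.1 hab
      exact eq_of_heq this.2⟩ with he
    obtain ⟨l', rfl⟩ := S19.finsupp_factor e l (by
      rintro ⟨s1, s2⟩ hs
      have : s1 = r := hsupp ⟨s1, s2⟩ hs
      subst this
      exact ⟨s2, rfl⟩)
    rw [Finsupp.linearCombination_embDomain] at hsum
    have hsub : Finsupp.linearCombination k (bHr r) l' = 0 := by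
      apply Submodule.injective_subtype (H r)
      rw [map_zero, Finsupp.apply_linearCombination]
      exact hsum
    have hli := (bHr r).linearIndependent
    rw [linearIndependent_iff] at hli
    rw [hli l' hsub, Finsupp.embDomain_zero]
  set Fam : (Fin n →₀ ℕ) × ι → A := fun p => S19.mon φ p.1 * hv p.2 with hFam
  -- global independence of the products
  have hglobal : ∀ l : ((Fin n →₀ ℕ) × ι) →₀ k,
      Finsupp.linearCombination k Fam l = 0 → l = 0 := by
    intro l hl
    have hterm : ∀ p : (Fin n →₀ ℕ) × ι, Fam p ∈ 𝒜 (S19.w d p.1 + p.2.1) := fun p =>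
      SetLike.mul_mem_graded (S19.mon_mem φ 𝒜 d hcen hmem p.1) (hle p.2.1 (hhv p.2))
    have hfilter : ∀ r, l.filter (fun p => S19.w d p.1 + p.2.1 = r) = 0 := by
      intro r
      refine S19.indep_aux φ 𝒜 d hcen hd hmem hreg H hle hdisj hv Sigma.fst hhv hbasis r 0
        _ ?_ ?_ ?_
      · intro p hp
        rw [Finsupp.support_filter, Finset.mem_filter] at hp
        exact hp.2
      · intro p _ i hi
        exact absurd hi (Nat.not_lt_zero _)
      · have lhs : (DirectSum.decompose 𝒜 (Finsupp.linearCombination k Fam l) r : A)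
            = ∑ p ∈ l.support, if S19.w d p.1 + p.2.1 = r then l p • Fam p else 0 := by
          rw [Finsupp.linearCombination_apply, Finsupp.sum, DirectSum.decompose_sum,
            DFinsupp.finset_sum_apply, AddSubmonoidClass.coe_finset_sum]
          refine Finset.sum_congr rfl fun p _ => ?_
          by_cases hpr : S19.w d p.1 + p.2.1 = r
          · rw [if_pos hpr,
              DirectSum.decompose_of_mem_same 𝒜 (hpr ▸ Submodule.smul_mem _ _ (hterm p))]
          · rw [if_neg hpr,
              DirectSum.decompose_of_mem_ne 𝒜 (Submodule.smul_mem _ _ (hterm p)) hpr]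
        have rhs : Finsupp.linearCombination k Fam (l.filter (fun p => S19.w d p.1 + p.2.1 = r))
            = ∑ p ∈ l.support, if S19.w d p.1 + p.2.1 = r then l p • Fam p else 0 := by
          rw [Finsupp.linearCombination_apply, Finsupp.sum, Finsupp.support_filter,
            Finset.sum_filter]
          refine Finset.sum_congr rfl fun p _ => ?_
          by_cases hpr : S19.w d p.1 + p.2.1 = r
          · rw [if_pos hpr, if_pos hpr,
              Finsupp.filter_apply_pos (fun q : (Fin n →₀ ℕ) × ι => S19.w d q.1 + q.2.1 = r) l hpr]
          · rw [if_neg hpr, if_neg hpr]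
        have hz : Finsupp.linearCombination k Fam
            (l.filter (fun p => S19.w d p.1 + p.2.1 = r)) = 0 := by
          rw [rhs, ← lhs, hl]
          simp
        rw [hz]
        exact Submodule.zero_mem _
    ext p
    have h1 : (l.filter (fun q => S19.w d q.1 + q.2.1 = S19.w d p.1 + p.2.1)) p = l p :=
      Finsupp.filter_apply_pos _ _ rfl
    rw [hfilter _] at h1
    exact h1.symm
  have hFamInd : LinearIndependent k Fam := linearIndependent_iff.2 hglobal
  have hvind : LinearIndependent k hv := by
    have hcomp := hFamInd.comp (fun s : ι => ((0 : Fin n →₀ ℕ), s))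
      (fun a b hab => congrArg Prod.snd hab)
    have hfun : (Fam ∘ fun s : ι => ((0 : Fin n →₀ ℕ), s)) = hv := by
      funext s
      show S19.mon φ 0 * hv s = hv s
      rw [S19.mon_zero, one_mul]
    rwa [hfun] at hcomp
  have hvmem : ∀ s : ι, hv s ∈ H' := fun s => (le_iSup H s.1) (hhv s)
  have hvspan : H' ≤ Submodule.span k (Set.range hv) := by
    refine iSup_le fun r => ?_
    intro x hx
    have hx2 : x ∈ Submodule.map (H r).subtype ⊤ := ⟨⟨x, hx⟩, trivial, rfl⟩
    rw [← (bHr r).span_eq, Submodule.map_span] at hx2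
    refine Submodule.span_mono ?_ hx2
    rintro y ⟨z, ⟨j, rfl⟩, rfl⟩
    exact ⟨⟨r, j⟩, rfl⟩
  have hmonmem : ∀ α, S19.mon φ α ∈ JS := by
    intro α
    rw [hJS, S19.span_mon φ hcen]
    exact Submodule.subset_span ⟨α, rfl⟩
  have hmonind : LinearIndependent k (S19.mon φ) := hind
  have hmonspan : JS ≤ Submodule.span k (Set.range (S19.mon φ)) :=
    le_of_eq (by rw [hJS, S19.span_mon φ hcen])
  let bJ : Basis (Fin n →₀ ℕ) k JS := S19.basisOfSpan JS (S19.mon φ) hmonmem hmonind hmonspan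
  let bH : Basis ι k H' := S19.basisOfSpan H' hv hvmem hvind hvspan
  set μ := Submodule.mulMap JS H' with hμ
  have hμb : ∀ p : (Fin n →₀ ℕ) × ι, μ ((Basis.tensorProduct bJ bH) p) = Fam p := by
    rintro ⟨α, s⟩
    rw [Module.Basis.tensorProduct_apply, hμ, Submodule.mulMap_tmul]
    show (bJ α : A) * (bH s : A) = _
    rw [S19.basisOfSpan_apply, S19.basisOfSpan_apply]
  have hker : LinearMap.ker μ = ⊥ := by
    rw [eq_bot_iff]
    intro x hx
    have hx0 : μ x = 0 := hx
    have hrepr := (Basis.tensorProduct bJ bH).linearCombination_repr x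
    have h0 : Finsupp.linearCombination k Fam ((Basis.tensorProduct bJ bH).repr x) = 0 := by
      have h1 : Finsupp.linearCombination k (⇑μ ∘ (Basis.tensorProduct bJ bH))
          ((Basis.tensorProduct bJ bH).repr x) = 0 := by
        rw [← Finsupp.apply_linearCombination, hrepr, hx0]
      have hfe : (⇑μ ∘ (Basis.tensorProduct bJ bH)) = Fam := funext hμb
      rwa [hfe] at h1
    have hz := hglobal _ h0
    show x ∈ (⊥ : Submodule k _)
    rw [Submodule.mem_bot, ← hrepr, hz, map_zero]
  have hinj : Function.Injective μ := by
    intro a b hab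
    have hmem' : a - b ∈ LinearMap.ker μ := by
      rw [LinearMap.mem_ker, map_sub, hab, sub_self]
    rw [hker, Submodule.mem_bot] at hmem'
    exact sub_eq_zero.mp hmem'
  have htop : JS * H' = ⊤ := S19.mul_top φ 𝒜 d hcen hd hmem H hsup
  have hsurj : Function.Surjective μ := by
    rw [← LinearMap.range_eq_top, hμ, Submodule.mulMap_range]
    exact htop
  have hsmul : ∀ (c : (Algebra.adjoin k (Set.range φ))) (a : A), c • a = (c : A) * a :=
    fun c a => rfl
  have hJspan : ⊤ ≤ Submodule.span (Algebra.adjoin k (Set.range φ)) (Set.range hv) := by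
    intro x _
    have hx : x ∈ JS * H' := by rw [htop]; trivial
    have hle2 : JS * H' ≤ Submodule.restrictScalars k
        (Submodule.span (Algebra.adjoin k (Set.range φ)) (Set.range hv)) := by
      rw [Submodule.mul_le]
      intro a ha b hb
      have hb' : b ∈ Submodule.span (Algebra.adjoin k (Set.range φ)) (Set.range hv) :=
        Submodule.span_le_restrictScalars k _ _ (hvspan hb)
      have hsm := Submodule.smul_mem
        (Submodule.span (Algebra.adjoin k (Set.range φ)) (Set.range hv))
        (⟨a, ha⟩ : Algebra.adjoin k (Set.range φ)) hb'
      rwa [hsmul] at hsm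
    exact hle2 hx
  have hJli : LinearIndependent (Algebra.adjoin k (Set.range φ)) hv := by
    rw [linearIndependent_iff]
    intro l hl
    set x := l.sum (fun s c => ((⟨(c : A), c.2⟩ : JS) ⊗ₜ[k] (bH s))) with hx
    have hμx : μ x = 0 := by
      rw [hx, map_finsuppSum]
      have hterm : ∀ (s : ι) (c : (Algebra.adjoin k (Set.range φ))),
          μ ((⟨(c : A), c.2⟩ : JS) ⊗ₜ[k] (bH s)) = (c : A) * hv s := by
        intro s c
        rw [hμ, Submodule.mulMap_tmul]
        show (c : A) * (bH s : A) = _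
        rw [S19.basisOfSpan_apply]
      calc (l.sum fun s c => μ ((⟨(c : A), c.2⟩ : JS) ⊗ₜ[k] (bH s)))
          = l.sum (fun s c => (c : A) * hv s) :=
            Finsupp.sum_congr (fun s _ => hterm s (l s))
        _ = 0 := by
            have h3 := hl
            rw [Finsupp.linearCombination_apply] at h3
            rw [← h3]
            exact Finsupp.sum_congr (fun s _ => (hsmul (l s) (hv s)).symm)
    have hx0 : x = 0 := hinj (show μ x = μ 0 by rw [hμx, map_zero])
    ext s₀
    set ψ : _ →ₗ[k] ↥JS :=
      (TensorProduct.rid k ↥JS).toLinearMap ∘ₗ (LinearMap.lTensor (↥JS) (bH.coord s₀)) with hψ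
    have hψx : ψ x = (⟨(l s₀ : A), (l s₀).2⟩ : JS) := by
      rw [hx, map_finsuppSum]
      have hterm : ∀ (s : ι) (c : (Algebra.adjoin k (Set.range φ))),
          ψ ((⟨(c : A), c.2⟩ : JS) ⊗ₜ[k] (bH s)) =
          (if s = s₀ then (⟨(c : A), c.2⟩ : JS) else 0) := by
        intro s c
        rw [hψ]
        rw [LinearMap.coe_comp, Function.comp_apply, LinearMap.lTensor_tmul,
          LinearEquiv.coe_toLinearMap, TensorProduct.rid_tmul, Basis.coord_apply,
          Basis.repr_self, Finsupp.single_apply]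
        by_cases hss : s = s₀
        · rw [if_pos hss, if_pos hss, one_smul]
        · rw [if_neg hss, if_neg hss, zero_smul]
      calc (l.sum fun s c => ψ ((⟨(c : A), c.2⟩ : JS) ⊗ₜ[k] (bH s)))
          = l.sum (fun s c => if s = s₀ then (⟨(c : A), c.2⟩ : JS) else 0) :=
            Finsupp.sum_congr (fun s _ => hterm s (l s))
        _ = (⟨(l s₀ : A), (l s₀).2⟩ : JS) := by
            rw [Finsupp.sum]
            rw [Finset.sum_ite_eq' l.support s₀ (fun s => (⟨(l s : A), (l s).2⟩ : JS))]
            by_cases hmem0 : s₀ ∈ l.support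
            · rw [if_pos hmem0]
            · rw [if_neg hmem0]
              have : l s₀ = 0 := Finsupp.notMem_support_iff.1 hmem0
              rw [this]
    have hfin : (⟨(l s₀ : A), (l s₀).2⟩ : JS) = 0 := by
      rw [← hψx, hx0, map_zero]
    have hval : (l s₀ : A) = 0 := congrArg Subtype.val hfin
    simpa using hval
  let bA : Basis ι (Algebra.adjoin k (Set.range φ)) A := Basis.mk hJli hJspan
  exact ⟨⟨hinj, hsurj⟩, Module.Free.of_basis bA⟩
end
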